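/- arXiv:1912.09538 — 10 statements merged into one kernel-verified Lean document; each statement's English description precedes it below -/
import Mathlib

section
/- Let G be a graph on an even number n of vertices with m edges. If every two non-adjacent vertices u, v satisfy d(u) + d(v) ≥ n, then m ≥ n²/4. -/
open Finset SimpleGraph

theorem stmt_0 {V : Type*} [Fintype V] [DecidableEq V] (G : SimpleGraph V)
    [DecidableRel G.Adj] (hEven : Even (Fintype.card V))
    (hdeg : ∀ u v : V, u ≠ v → ¬ G.Adj u v →
      G.degree u + G.degree v ≥ Fintype.card V) :
    4 * G.edgeFinset.card ≥ Fintype.card V ^ 2 := by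
  classical
  set n := Fintype.card V with hn
  obtain h0 | hpos := Nat.eq_zero_or_pos n
  · simp [← hn, h0]
  have hn2 : 2 ≤ n := by
    rcases hEven with ⟨k, hk⟩
    omega
  have hdc : ∀ u : V, G.degree u + Gᶜ.degree u + 1 = n := by
    intro u
    have h1 : Gᶜ.degree u = n - 1 - G.degree u := G.degree_compl u
    have h2 : G.degree u < n := G.degree_lt_card_verts u
    omega
  set s := ∑ u : V, G.degree u with hs
  set t := ∑ u : V, Gᶜ.degree u with ht
  set q := ∑ u : V, (G.degree u)^2 with hq
  set P := ∑ u : V, G.degree u * Gᶜ.degree u with hP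
  -- swap lemma
  have hswap : ∑ u : V, ∑ v ∈ Gᶜ.neighborFinset u, G.degree v = P := by
    rw [hP]
    simp_rw [neighborFinset_eq_filter, sum_filter]
    rw [Finset.sum_comm]
    refine Finset.sum_congr rfl fun v _ => ?_
    have h1 : ∑ u : V, (if Gᶜ.Adj u v then G.degree v else 0)
        = ∑ u : V, (if Gᶜ.Adj v u then G.degree v else 0) :=
      Finset.sum_congr rfl fun u _ => if_congr (Gᶜ.adj_comm u v) rfl rfl
    rw [h1, ← sum_filter, ← neighborFinset_eq_filter, Finset.sum_const, smul_eq_mul,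
      card_neighborFinset_eq_degree, mul_comm]
  -- Ore bound, summed per vertex
  have hore : ∀ u : V, n * Gᶜ.degree u
      ≤ G.degree u * Gᶜ.degree u + ∑ v ∈ Gᶜ.neighborFinset u, G.degree v := by
    intro u
    have h1 : ∀ v ∈ Gᶜ.neighborFinset u, n ≤ G.degree u + G.degree v := by
      intro v hv
      rw [mem_neighborFinset, compl_adj] at hv
      exact hdeg u v hv.1 hv.2
    calc n * Gᶜ.degree u = ∑ _v ∈ Gᶜ.neighborFinset u, n := by
          rw [Finset.sum_const, smul_eq_mul, card_neighborFinset_eq_degree, mul_comm]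
      _ ≤ ∑ v ∈ Gᶜ.neighborFinset u, (G.degree u + G.degree v) := Finset.sum_le_sum h1
      _ = G.degree u * Gᶜ.degree u + ∑ v ∈ Gᶜ.neighborFinset u, G.degree v := by
          rw [Finset.sum_add_distrib, Finset.sum_const, smul_eq_mul,
            card_neighborFinset_eq_degree, mul_comm]
  have hA : n * t ≤ 2 * P := by
    calc n * t = ∑ u : V, n * Gᶜ.degree u := by rw [ht, Finset.mul_sum]
      _ ≤ ∑ u : V, (G.degree u * Gᶜ.degree u + ∑ v ∈ Gᶜ.neighborFinset u, G.degree v) :=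
          Finset.sum_le_sum fun u _ => hore u
      _ = P + P := by rw [Finset.sum_add_distrib, hswap, hP]
      _ = 2 * P := by ring
  have hB : P + q + s = s * n := by
    rw [hP, hq, hs, Finset.sum_mul, ← Finset.sum_add_distrib, ← Finset.sum_add_distrib]
    refine Finset.sum_congr rfl fun u _ => ?_
    have h1 := hdc u
    nlinarith [h1]
  have hC : s + t + n = n * n := by
    have h1 : ∑ u : V, (G.degree u + Gᶜ.degree u + 1) = ∑ _u : V, n :=
      Finset.sum_congr rfl fun u _ => hdc u
    simp only [Finset.sum_add_distrib, Finset.sum_const, Finset.card_univ, ← hn, smul_eq_mul,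
      mul_one] at h1
    rw [hs, ht]
    omega
  have hD : s ^ 2 ≤ n * q := by
    have h1 := sq_sum_le_card_mul_sum_sq (s := (Finset.univ : Finset V))
      (f := fun u => (G.degree u : ℤ))
    have h2 : ((s : ℤ)) ^ 2 ≤ (n : ℤ) * (q : ℤ) := by
      rw [hs, hq]
      push_cast
      simpa [← hn, Finset.card_univ] using h1
    exact_mod_cast h2
  have hE : s = 2 * G.edgeFinset.card := by
    rw [hs]
    exact G.sum_degrees_eq_twice_card_edges
  -- final arithmetic over ℤ
  have hgoal : n ^ 2 ≤ 2 * s := by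
    zify at hA hB hC hD hn2 ⊢
    have hnA : (n:ℤ) * ((n:ℤ) * t) ≤ (n:ℤ) * (2 * P) :=
      mul_le_mul_of_nonneg_left hA (by positivity)
    have hint1 : (n:ℤ) * ((P:ℤ) + q + s) = (n:ℤ) * ((s:ℤ) * n) := by rw [hB]
    have hint2 : (n:ℤ) * (n:ℤ) * ((s:ℤ) + t + n) = (n:ℤ) * (n:ℤ) * ((n:ℤ) * n) := by rw [hC]
    have hE2 : 3*(s:ℤ)*(n:ℤ)^2 + (n:ℤ)^3 ≥ 2*(s:ℤ)^2 + 2*(s:ℤ)*n + (n:ℤ)^4 := by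
      linarith [hnA, hint1, hint2, hD]
    have ha : (0:ℤ) ≤ (n:ℤ)^2 - s - n := by nlinarith [hA, hC, hB, hD]
    have m2 : (0:ℤ) ≤ (n:ℤ) * ((n:ℤ) - 2) :=
      mul_nonneg (by positivity) (by linarith)
    nlinarith [hE2, ha, m2]
  omega
end

section
/- Let G be a graph on an odd number n of vertices with m edges. If every two non-adjacent vertices u, v satisfy d(u) + d(v) ≥ n + 2, then m ≥ n²/4 + n/2 − 3/4. -/
theorem stmt_1 {V : Type*} [Fintype V] [DecidableEq V] (G : SimpleGraph V)
    [DecidableRel G.Adj] (hOdd : Odd (Fintype.card V))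
    (hdeg : ∀ u v : V, u ≠ v → ¬ G.Adj u v →
      G.degree u + G.degree v ≥ Fintype.card V + 2) :
    4 * G.edgeFinset.card + 3 ≥ Fintype.card V ^ 2 + 2 * Fintype.card V := by
  classical
  have hn : 0 < Fintype.card V := hOdd.pos
  have : Nonempty V := Fintype.card_pos_iff.mp hn
  obtain ⟨v, -, hv⟩ := Finset.exists_min_image (Finset.univ : Finset V) (fun u => G.degree u) Finset.univ_nonempty
  set n := Fintype.card V with hn_def
  set δ := G.degree v with hδ
  set N := G.neighborFinset v with hN
  set R := Finset.univ \ insert v N with hRdef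
  have hvN : v ∉ N := by simp [hN]
  have hNcard : N.card = δ := G.card_neighborFinset_eq_degree v
  have hsub : insert v N ⊆ Finset.univ := Finset.subset_univ _
  have hRcard : R.card + (δ + 1) = n := by
    have h1 : (insert v N).card = δ + 1 := by
      rw [Finset.card_insert_of_notMem hvN, hNcard]
    have h2 : R.card = n - (δ + 1) := by
      rw [hRdef, Finset.card_sdiff_of_subset hsub, Finset.card_univ, h1]
    have h3 : δ < n := G.degree_lt_card_verts v
    omega
  have hsplit : ∑ u, G.degree u = δ + ∑ u ∈ N, G.degree u + ∑ u ∈ R, G.degree u := by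
    rw [hRdef, ← Finset.sum_sdiff hsub, Finset.sum_insert hvN]
    ring
  have hSN : δ * δ ≤ ∑ u ∈ N, G.degree u := by
    calc δ * δ = ∑ _u ∈ N, δ := by rw [Finset.sum_const, smul_eq_mul, hNcard]
    _ ≤ ∑ u ∈ N, G.degree u := Finset.sum_le_sum (fun u _ => hv u (Finset.mem_univ u))
  have hSR : R.card * (n + 2) ≤ ∑ u ∈ R, G.degree u + R.card * δ := by
    have key : ∀ u ∈ R, n + 2 ≤ G.degree u + δ := by
      intro u hu
      simp only [hRdef, Finset.mem_sdiff, Finset.mem_insert, Finset.mem_univ, true_and,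
        not_or] at hu
      have hne : u ≠ v := hu.1
      have hna : ¬ G.Adj u v := fun h =>
        hu.2 ((SimpleGraph.mem_neighborFinset G v u).mpr h.symm)
      exact hdeg u v hne hna
    calc R.card * (n + 2) = ∑ _u ∈ R, (n + 2) := by rw [Finset.sum_const, smul_eq_mul]
    _ ≤ ∑ u ∈ R, (G.degree u + δ) := Finset.sum_le_sum key
    _ = ∑ u ∈ R, G.degree u + R.card * δ := by
        rw [Finset.sum_add_distrib, Finset.sum_const, smul_eq_mul]
  have hsum : ∑ u, G.degree u = 2 * G.edgeFinset.card := G.sum_degrees_eq_twice_card_edges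
  have hne2 : 2 * δ ≠ n := by
    obtain ⟨k, hk⟩ := hOdd
    omega
  set m := G.edgeFinset.card with hm
  set r := R.card with hr
  set SN := ∑ u ∈ N, G.degree u with hSNdef
  set SR := ∑ u ∈ R, G.degree u with hSRdef
  rw [hsplit] at hsum
  zify at hSN hSR hRcard hsum ⊢
  have hx : (2 * (δ:ℤ) - n) ≤ -1 ∨ 1 ≤ (2 * (δ:ℤ) - n) := by omega
  have hsq : 1 ≤ (2 * (δ:ℤ) - n) ^ 2 := by
    rcases hx with h | h <;> nlinarith
  nlinarith [hsq, hSR, hSN, hRcard, hsum]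
end

section
/- Let n be odd and let m be a real number satisfying 8m² − 6mn² + n⁴ + n³ − 2n² ≤ 0. Then m ≥ n²/4 + n/2 − 3/4. -/
theorem stmt_5 (n : ℤ) (hn : Odd n) (hpos : 0 < n) (m : ℝ)
    (h : 8 * m ^ 2 - 6 * m * (n : ℝ) ^ 2 + (n : ℝ) ^ 4 + (n : ℝ) ^ 3
        - 2 * (n : ℝ) ^ 2 ≤ 0) :
    m ≥ (n : ℝ) ^ 2 / 4 + (n : ℝ) / 2 - 3 / 4 := by
  obtain ⟨k, hk⟩ := hn
  have hkk : 0 ≤ k * (k - 1) := by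
    rcases le_or_gt k 0 with hle | hgt
    · nlinarith
    · nlinarith
  have h1 : (0:ℝ) ≤ ((n:ℝ) - 1) * ((n:ℝ) - 3) := by
    have : ((n:ℝ)) = 2 * (k:ℝ) + 1 := by rw [hk]; push_cast; ring
    have hkk' : (0:ℝ) ≤ (k:ℝ) * ((k:ℝ) - 1) := by exact_mod_cast hkk
    nlinarith
  by_contra hc
  push_neg at hc
  have ht : 0 < (n:ℝ)^2/4 + (n:ℝ)/2 - 3/4 - m := by linarith
  have hq : (0:ℝ) < (n:ℝ)^2 - 4*(n:ℝ) + 6 := by nlinarith [sq_nonneg ((n:ℝ) - 2)]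
  nlinarith [sq_nonneg ((n:ℝ)^2/4 + (n:ℝ)/2 - 3/4 - m), mul_pos ht hq]
end

section
/- Let G be a graph on n vertices with a maximal proper edge coloring using n−1 colors (n even). If u and v are non-adjacent with d(u) + d(v) = n − 1, then every vertex of G other than u and v is adjacent to u or to v, and u and v have exactly one common neighbor. -/
/-- A proper edge coloring of `G` with colors from `C`: every edge gets a color
in `C`, and distinct edges sharing a vertex get distinct colors. -/
def ProperEdgeColoring {V : Type*} (G : SimpleGraph V) (f : Sym2 V → ℕ)
    (C : Finset ℕ) : Prop :=
  (∀ e ∈ G.edgeSet, f e ∈ C) ∧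
    ∀ e₁ ∈ G.edgeSet, ∀ e₂ ∈ G.edgeSet, e₁ ≠ e₂ →
      (∃ v : V, v ∈ e₁ ∧ v ∈ e₂) → f e₁ ≠ f e₂

/-- Vertex `v` sees color `c`: some edge of `G` incident to `v` has color `c`. -/
def Sees {V : Type*} (G : SimpleGraph V) (f : Sym2 V → ℕ) (v : V) (c : ℕ) : Prop :=
  ∃ e ∈ G.edgeSet, v ∈ e ∧ f e = c

/-- A maximal edge coloring: proper, and adding any edge `uv` in any color `c ∈ C`
makes it improper, i.e. `u` or `v` already sees `c`. -/
def MaximalEdgeColoring {V : Type*} (G : SimpleGraph V) (f : Sym2 V → ℕ)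
    (C : Finset ℕ) : Prop :=
  ProperEdgeColoring G f C ∧
    ∀ u v : V, u ≠ v → ¬ G.Adj u v → ∀ c ∈ C, Sees G f u c ∨ Sees G f v c

open Finset
theorem stmt_7 {V : Type*} [Fintype V] [DecidableEq V] (G : SimpleGraph V)
    [DecidableRel G.Adj] (f : Sym2 V → ℕ) (C : Finset ℕ)
    (hEven : Even (Fintype.card V)) (hC : C.card = Fintype.card V - 1)
    (hmax : MaximalEdgeColoring G f C)
    (u v : V) (huv : u ≠ v) (hadj : ¬ G.Adj u v)
    (hdeg : G.degree u + G.degree v = Fintype.card V - 1) :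
    (∀ w : V, w ≠ u → w ≠ v → G.Adj u w ∨ G.Adj v w) ∧
      (Finset.univ.filter (fun w : V => G.Adj u w ∧ G.Adj v w)).card = 1 := by
  classical
  obtain ⟨⟨hcol, hprop⟩, hmx⟩ := hmax
  set n := Fintype.card V with hn
  set S : V → Finset ℕ := fun x => (G.incidenceFinset x).image f with hS
  have hSees : ∀ x c, Sees G f x c ↔ c ∈ S x := by
    intro x c
    constructor
    · rintro ⟨e, he, hxe, hfe⟩
      exact mem_image.mpr ⟨e, (SimpleGraph.mem_incidenceFinset (G := G) (v := _) e).mpr ⟨he, hxe⟩, hfe⟩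
    · rintro hc
      obtain ⟨e, he, hfe⟩ := mem_image.mp hc
      obtain ⟨he1, he2⟩ := (SimpleGraph.mem_incidenceFinset (G := G) (v := _) e).mp he
      exact ⟨e, he1, he2, hfe⟩
  have hScard : ∀ x, (S x).card = G.degree x := by
    intro x
    rw [show S x = (G.incidenceFinset x).image f from rfl,
      Finset.card_image_of_injOn, G.card_incidenceFinset_eq_degree]
    intro e1 he1 e2 he2 hfe
    by_contra hne
    obtain ⟨h11, h12⟩ := (SimpleGraph.mem_incidenceFinset (G := G) (v := _) e1).mp he1
    obtain ⟨h21, h22⟩ := (SimpleGraph.mem_incidenceFinset (G := G) (v := _) e2).mp he2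
    exact hprop e1 h11 e2 h21 hne ⟨x, h12, h22⟩ hfe
  have hSsub : ∀ x, S x ⊆ C := by
    intro x c hc
    obtain ⟨e, he, hfe⟩ := mem_image.mp hc
    obtain ⟨he1, _⟩ := (SimpleGraph.mem_incidenceFinset (G := G) (v := _) e).mp he
    exact hfe ▸ hcol e he1
  have hUnion : S u ∪ S v = C := by
    apply subset_antisymm (union_subset (hSsub u) (hSsub v))
    intro c hc
    rcases hmx u v huv hadj c hc with h | h
    · exact mem_union_left _ ((hSees u c).mp h)
    · exact mem_union_right _ ((hSees v c).mp h)
  have hdisj : S u ∩ S v = ∅ := by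
    have h1 := card_union_add_card_inter (S u) (S v)
    rw [hUnion, hC, hScard, hScard, hdeg] at h1
    have : (S u ∩ S v).card = 0 := by omega
    exact card_eq_zero.mp this
  have part1 : ∀ w : V, w ≠ u → w ≠ v → G.Adj u w ∨ G.Adj v w := by
    intro w hwu hwv
    by_contra h
    push_neg at h
    obtain ⟨h1, h2⟩ := h
    have hdw : G.neighborFinset w ⊆ univ \ {u, v, w} := by
      intro x hx
      rw [SimpleGraph.mem_neighborFinset] at hx
      simp only [mem_sdiff, mem_univ, mem_insert, mem_singleton, true_and]
      push_neg
      refine ⟨?_, ?_, ?_⟩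
      · rintro rfl; exact h1 hx.symm
      · rintro rfl; exact h2 hx.symm
      · rintro rfl; exact G.irrefl hx
    have hcard3 : ({u, v, w} : Finset V).card = 3 := by
      rw [card_insert_of_notMem, card_insert_of_notMem, card_singleton] <;>
        simp [huv, hwu.symm, hwv.symm, Ne.symm]
    have h3n : 3 ≤ n := by
      have := card_le_card (subset_univ ({u, v, w} : Finset V))
      rwa [hcard3, card_univ, ← hn] at this
    have hsdc : (univ \ ({u, v, w} : Finset V)).card = n - 3 := by
      rw [card_sdiff_of_subset (subset_univ _), card_univ, hcard3, ← hn]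
    have hlt : (S w).card < C.card := by
      have hle := card_le_card hdw
      rw [hsdc, SimpleGraph.card_neighborFinset_eq_degree] at hle
      rw [hScard, hC]
      omega
    obtain ⟨c, hcC, hcw⟩ : ∃ c ∈ C, c ∉ S w := by
      by_contra hcon
      push_neg at hcon
      exact absurd (card_le_card hcon) (not_le.mpr hlt)
    have hu : c ∈ S u := by
      rcases hmx u w hwu.symm h1 c hcC with h | h
      · exact (hSees u c).mp h
      · exact absurd ((hSees w c).mp h) hcw
    have hv : c ∈ S v := by
      rcases hmx v w hwv.symm h2 c hcC with h | h
      · exact (hSees v c).mp h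
      · exact absurd ((hSees w c).mp h) hcw
    have : c ∈ S u ∩ S v := mem_inter.mpr ⟨hu, hv⟩
    rw [hdisj] at this
    exact absurd this (notMem_empty c)
  refine ⟨part1, ?_⟩
  have hU : G.neighborFinset u ∪ G.neighborFinset v = univ \ {u, v} := by
    ext x
    simp only [mem_union, SimpleGraph.mem_neighborFinset, mem_sdiff, mem_univ,
      mem_insert, mem_singleton, true_and]
    constructor
    · rintro (h | h)
      · push_neg
        constructor
        · rintro rfl; exact G.irrefl h
        · rintro rfl; exact hadj h
      · push_neg
        constructor
        · rintro rfl; exact hadj h.symm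
        · rintro rfl; exact G.irrefl h
    · intro hx
      push_neg at hx
      exact part1 x hx.1 hx.2
  have hn2 : 2 ≤ n := by
    have : 1 < Fintype.card V := Fintype.one_lt_card_iff_nontrivial.mpr ⟨u, v, huv⟩
    omega
  have hcardU : (univ \ ({u, v} : Finset V)).card = n - 2 := by
    rw [card_sdiff_of_subset (subset_univ _), card_univ, card_insert_of_notMem (by simp [huv]),
      card_singleton]
  have hkey := card_union_add_card_inter (G.neighborFinset u) (G.neighborFinset v)
  rw [hU, hcardU, SimpleGraph.card_neighborFinset_eq_degree,
    SimpleGraph.card_neighborFinset_eq_degree, hdeg] at hkey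
  have hfilter : Finset.univ.filter (fun w : V => G.Adj u w ∧ G.Adj v w)
      = G.neighborFinset u ∩ G.neighborFinset v := by
    ext x; simp [SimpleGraph.mem_neighborFinset]
  rw [hfilter]
  omega
end

section
/- Let G be a graph on n vertices with a maximal proper edge coloring using n colors (n odd). If u and v are non-adjacent with d(u) + d(v) = n and the sets of colors seen by u and v are disjoint, then u and v have exactly two common neighbors. -/
theorem stmt_8 {V : Type*} [Fintype V] [DecidableEq V] (G : SimpleGraph V)
    [DecidableRel G.Adj] (f : Sym2 V → ℕ) (C : Finset ℕ)
    (hOdd : Odd (Fintype.card V)) (hC : C.card = Fintype.card V)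
    (hmax : MaximalEdgeColoring G f C)
    (u v : V) (huv : u ≠ v) (hadj : ¬ G.Adj u v)
    (hdeg : G.degree u + G.degree v = Fintype.card V)
    (hdisj : ∀ c : ℕ, ¬ (Sees G f u c ∧ Sees G f v c)) :
    (Finset.univ.filter (fun w : V => G.Adj u w ∧ G.Adj v w)).card = 2 := by
  classical
  have key : ∀ w : V, w ≠ u → w ≠ v → G.Adj u w ∨ G.Adj v w := by
    intro w hwu hwv
    by_contra h
    push_neg at h
    obtain ⟨h1, h2⟩ := h
    set S := (G.incidenceFinset w).image f with hS
    have hScard : S.card ≤ G.degree w :=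
      le_trans Finset.card_image_le (le_of_eq (G.card_incidenceFinset_eq_degree w))
    have hlt : S.card < C.card := by
      rw [hC]; exact lt_of_le_of_lt hScard (G.degree_lt_card_verts w)
    have hns : ¬ C ⊆ S := fun hsub => absurd (Finset.card_le_card hsub) (not_le.mpr hlt)
    obtain ⟨c, hcC, hcS⟩ := Finset.not_subset.mp hns
    have hwsees : ¬ Sees G f w c := by
      rintro ⟨e, he, hwe, hfe⟩
      refine hcS (Finset.mem_image.mpr ⟨e, ?_, hfe⟩)
      simp only [SimpleGraph.mem_incidenceFinset, SimpleGraph.mem_incidenceSet] at *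
      exact ⟨he, hwe⟩
    have hus : Sees G f u c := (hmax.2 u w (Ne.symm hwu) h1 c hcC).resolve_right hwsees
    have hvs : Sees G f v c := (hmax.2 v w (Ne.symm hwv) h2 c hcC).resolve_right hwsees
    exact hdisj c ⟨hus, hvs⟩
  have hunion : G.neighborFinset u ∪ G.neighborFinset v = Finset.univ \ {u, v} := by
    ext w
    simp only [Finset.mem_union, SimpleGraph.mem_neighborFinset, Finset.mem_sdiff,
      Finset.mem_univ, Finset.mem_insert, Finset.mem_singleton, true_and]
    constructor
    · rintro (h | h) <;> rintro (rfl | rfl)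
      · exact G.irrefl h
      · exact hadj h
      · exact hadj h.symm
      · exact G.irrefl h
    · intro hne
      push_neg at hne
      exact key w hne.1 hne.2
  have hinter : G.neighborFinset u ∩ G.neighborFinset v =
      Finset.univ.filter (fun w : V => G.Adj u w ∧ G.Adj v w) := by
    ext w
    simp [SimpleGraph.mem_neighborFinset]
  have hcard2 : ({u, v} : Finset V).card = 2 := Finset.card_pair huv
  have hsd : (Finset.univ \ ({u, v} : Finset V)).card = Fintype.card V - 2 := by
    rw [Finset.card_sdiff_of_subset (Finset.subset_univ _), hcard2, Finset.card_univ]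
  have hle : 2 ≤ Fintype.card V := by
    rw [← hcard2]
    exact Finset.card_le_card (Finset.subset_univ _)
  have hie := Finset.card_union_add_card_inter (G.neighborFinset u) (G.neighborFinset v)
  rw [hunion, hinter, hsd, SimpleGraph.card_neighborFinset_eq_degree,
    SimpleGraph.card_neighborFinset_eq_degree] at hie
  omega
end

section
/- Let G be a graph of odd order n ≥ 9 having a maximal proper edge coloring with n colors, and suppose |E(G)| < n²/4 + n/2 − 3/4. Then any two non-adjacent vertices u, v satisfy d(u) + d(v) ≥ n + 1. -/
set_option linter.unusedSectionVars false
set_option linter.unusedVariables false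
set_option maxHeartbeats 1000000



namespace MECaux

open Finset

variable {V : Type*} [Fintype V] [DecidableEq V] (G : SimpleGraph V) [DecidableRel G.Adj]
  (f : Sym2 V → ℕ) (C : Finset ℕ)

/-- palette of a vertex -/
def pal (z : V) : Finset ℕ := (G.neighborFinset z).image (fun t => f s(z, t))

variable {G f C}

lemma mem_pal {z : V} {c : ℕ} : c ∈ pal G f z ↔ ∃ t, G.Adj z t ∧ f s(z,t) = c := by
  simp [pal]

lemma sees_iff_mem_pal {z : V} {c : ℕ} : Sees G f z c ↔ c ∈ pal G f z := by
  constructor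
  · rintro ⟨e, he, hz, hc⟩
    induction e with
    | h x y =>
      rw [SimpleGraph.mem_edgeSet] at he
      rw [Sym2.mem_iff] at hz
      rcases hz with rfl | rfl
      · exact mem_pal.mpr ⟨y, he, hc⟩
      · exact mem_pal.mpr ⟨x, he.symm, by rwa [Sym2.eq_swap]⟩
  · rintro hc
    rcases mem_pal.mp hc with ⟨t, ha, hc⟩
    exact ⟨s(z,t), G.mem_edgeSet.mpr ha, by simp, hc⟩

lemma pal_subset (hcol : ProperEdgeColoring G f C) (z : V) : pal G f z ⊆ C := by
  intro c hc
  rcases mem_pal.mp hc with ⟨t, ha, rfl⟩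
  exact hcol.1 _ (G.mem_edgeSet.mpr ha)

lemma injOn_color (hcol : ProperEdgeColoring G f C) (z : V) :
    Set.InjOn (fun t => f s(z,t)) (G.neighborFinset z) := by
  intro t1 h1 t2 h2 heq
  by_contra hne
  simp only [coe_sort_coe, Finset.mem_coe, SimpleGraph.mem_neighborFinset] at h1 h2
  refine hcol.2 s(z,t1) (G.mem_edgeSet.mpr h1) s(z,t2) (G.mem_edgeSet.mpr h2) ?_ ⟨z, by simp, by simp⟩ heq
  intro hee
  rw [Sym2.eq_iff] at hee
  rcases hee with ⟨-, h⟩ | ⟨h, -⟩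
  · exact hne h
  · exact (G.ne_of_adj h2) h

lemma card_pal (hcol : ProperEdgeColoring G f C) (z : V) :
    (pal G f z).card = G.degree z := by
  rw [pal, Finset.card_image_of_injOn (injOn_color hcol z), SimpleGraph.card_neighborFinset_eq_degree]

/-- number of neighbors of z whose edge color lies in P equals |pal z ∩ P| -/
lemma card_colored (hcol : ProperEdgeColoring G f C) (z : V) (P : Finset ℕ) :
    ((G.neighborFinset z).filter (fun t => f s(z,t) ∈ P)).card = (pal G f z ∩ P).card := by
  have : pal G f z ∩ P = ((G.neighborFinset z).filter (fun t => f s(z,t) ∈ P)).image (fun t => f s(z,t)) := by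
    ext c
    simp only [Finset.mem_inter, Finset.mem_image, Finset.mem_filter]
    constructor
    · rintro ⟨hc, hcP⟩
      rcases mem_pal.mp hc with ⟨t, ha, rfl⟩
      exact ⟨t, ⟨by simpa using ha, hcP⟩, rfl⟩
    · rintro ⟨t, ⟨ht, htP⟩, rfl⟩
      exact ⟨mem_pal.mpr ⟨t, by simpa using ht, rfl⟩, htP⟩
  rw [this, Finset.card_image_of_injOn ((injOn_color hcol z).mono (by
    intro t ht; simp only [Finset.coe_filter, Set.mem_setOf_eq] at ht; simpa using ht.1))]



lemma even_card_of_invol_aux {α : Type*} [DecidableEq α] :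
    ∀ (n : ℕ) (s : Finset α) (g : α → α), s.card = n →
    (∀ z ∈ s, g z ∈ s) → (∀ z ∈ s, g (g z) = z) → (∀ z ∈ s, g z ≠ z) →
    Even s.card := by
  intro n
  induction n using Nat.strong_induction_on with
  | _ n ih =>
    intro s g hs h1 h2 h3
    rcases Finset.eq_empty_or_nonempty s with rfl | ⟨z, hz⟩
    · simp
    · have hgz := h1 z hz
      have hne := h3 z hz
      set s' := (s.erase z).erase (g z) with hs'
      have hzs' : g z ∈ s.erase z := Finset.mem_erase.mpr ⟨hne, hgz⟩
      have hcard : s'.card + 2 = s.card := by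
        rw [hs', Finset.card_erase_of_mem hzs', Finset.card_erase_of_mem hz]
        have : 2 ≤ s.card := Finset.one_lt_card.mpr ⟨z, hz, g z, hgz, fun h => hne h.symm⟩
        omega
      have hmem : ∀ w ∈ s', w ∈ s ∧ w ≠ z ∧ w ≠ g z := by
        intro w hw
        simp only [hs', Finset.mem_erase] at hw
        exact ⟨hw.2.2, hw.2.1, hw.1⟩
      have h1' : ∀ w ∈ s', g w ∈ s' := by
        intro w hw
        obtain ⟨hws, hwz, hwgz⟩ := hmem w hw
        simp only [hs', Finset.mem_erase]
        refine ⟨?_, ?_, h1 w hws⟩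
        · intro h; exact hwz (by rw [← h2 w hws, h, h2 z hz])
        · intro h; exact hwgz (by rw [← h2 w hws, h])
      have h2' : ∀ w ∈ s', g (g w) = w := fun w hw => h2 w (hmem w hw).1
      have h3' : ∀ w ∈ s', g w ≠ w := fun w hw => h3 w (hmem w hw).1
      have hev := ih s'.card (by omega) s' g rfl h1' h2' h3'
      rcases hev with ⟨k, hk⟩
      exact ⟨k + 1, by omega⟩

lemma even_card_of_invol {α : Type*} [DecidableEq α] (s : Finset α) (g : α → α)
    (h1 : ∀ z ∈ s, g z ∈ s) (h2 : ∀ z ∈ s, g (g z) = z) (h3 : ∀ z ∈ s, g z ≠ z) :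
    Even s.card :=
  even_card_of_invol_aux s.card s g rfl h1 h2 h3

lemma sum_card_filter_swap {α : Type*} [DecidableEq α] (S T : Finset α) (p : α → α → Prop)
    [∀ x y : α, Decidable (p x y)] :
    ∑ x ∈ S, (T.filter (fun y => p x y)).card = ∑ y ∈ T, (S.filter (fun x => p x y)).card := by
  simp only [Finset.card_filter]
  exact Finset.sum_comm

lemma bad_abstract (Pv P1 P2 : Finset ℕ) (b SX : ℕ) (xc : ℕ → ℕ)
    (hb : Odd b) (hPv : Pv.card = b)
    (hcover : Pv ⊆ P1 ∪ P2)
    (hσ : (P1 ∩ Pv).card + (P2 ∩ Pv).card + SX + 2 = 2 * b)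
    (hT : ∑ c ∈ Pv, xc c = SX)
    (hodd : ∀ c ∈ Pv, ¬(c ∈ P1 ∧ c ∈ P2) → Odd (xc c)) :
    False := by
  classical
  set both := Pv.filter (fun c => (c ∈ P1 ∧ c ∈ P2)) with hboth
  set Sg := Pv.filter (fun c => ¬(c ∈ P1 ∧ c ∈ P2)) with hSg
  have h_add : both.card + Sg.card = b := by
    rw [hboth, hSg, Finset.card_filter_add_card_filter_not, hPv]
  have hc1 : (P1 ∩ Pv).card + (P2 ∩ Pv).card = ∑ c ∈ Pv, ((if c ∈ P1 then 1 else 0) + (if c ∈ P2 then 1 else 0)) := by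
    rw [Finset.sum_add_distrib, Finset.inter_comm P1 Pv, Finset.inter_comm P2 Pv,
      ← Finset.filter_mem_eq_inter, ← Finset.filter_mem_eq_inter,
      Finset.card_filter, Finset.card_filter]
  have hsplit : ∑ c ∈ Pv, ((if c ∈ P1 then 1 else 0) + (if c ∈ P2 then 1 else 0))
      = ∑ c ∈ both, ((if c ∈ P1 then 1 else 0) + (if c ∈ P2 then 1 else 0))
        + ∑ c ∈ Sg, ((if c ∈ P1 then 1 else 0) + (if c ∈ P2 then 1 else 0)) :=
    (Finset.sum_filter_add_sum_filter_not Pv _ _).symm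
  have hone : ∀ c ∈ Sg, ((if c ∈ P1 then 1 else 0) + (if c ∈ P2 then 1 else 0)) = 1 := by
    intro c hc
    rw [hSg, Finset.mem_filter] at hc
    have hcc := hcover hc.1
    rw [Finset.mem_union] at hcc
    have := hc.2
    by_cases h1 : c ∈ P1 <;> by_cases h2 : c ∈ P2 <;> simp_all
  have htwo : ∀ c ∈ both, ((if c ∈ P1 then 1 else 0) + (if c ∈ P2 then 1 else 0)) = 2 := by
    intro c hc
    rw [hboth, Finset.mem_filter] at hc
    simp [hc.2.1, hc.2.2]
  have e1 : ∑ c ∈ both, ((if c ∈ P1 then 1 else 0) + (if c ∈ P2 then 1 else 0)) = 2 * both.card := by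
    rw [Finset.sum_congr rfl htwo]
    simp [mul_comm]
  have e2 : ∑ c ∈ Sg, ((if c ∈ P1 then 1 else 0) + (if c ∈ P2 then 1 else 0)) = Sg.card := by
    rw [Finset.sum_congr rfl hone]
    simp
  have hσ2 : (P1 ∩ Pv).card + (P2 ∩ Pv).card = 2 * both.card + Sg.card := by
    rw [hc1, hsplit, e1, e2]
  have hlow : Sg.card ≤ SX := by
    rw [← hT]
    calc Sg.card = ∑ _c ∈ Sg, 1 := by simp
    _ ≤ ∑ c ∈ Sg, xc c := Finset.sum_le_sum (fun c hc => by
        obtain ⟨k, hk⟩ := hodd c (Finset.mem_filter.mp hc).1 (Finset.mem_filter.mp hc).2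
        omega)
    _ ≤ ∑ c ∈ Pv, xc c := Finset.sum_le_sum_of_subset (Finset.filter_subset _ _)
  have : Sg.card = SX + 2 := by omega
  omega

end MECaux

theorem stmt_9 {V : Type*} [Fintype V] [DecidableEq V] (G : SimpleGraph V)
    [DecidableRel G.Adj] (f : Sym2 V → ℕ) (C : Finset ℕ)
    (hOdd : Odd (Fintype.card V)) (hn : 9 ≤ Fintype.card V)
    (hC : C.card = Fintype.card V)
    (hmax : MaximalEdgeColoring G f C)
    (hm : 4 * G.edgeFinset.card < Fintype.card V ^ 2 + 2 * Fintype.card V - 3) :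
    ∀ u v : V, u ≠ v → ¬ G.Adj u v →
      G.degree u + G.degree v ≥ Fintype.card V + 1 := by
  classical
  intro u v hne hnadj
  by_contra hcon
  push_neg at hcon
  have hprop : ProperEdgeColoring G f C := hmax.1
  set n := Fintype.card V with hndef
  -- palette basics
  have hpc : ∀ z : V, (MECaux.pal G f z).card = G.degree z :=
    fun z => MECaux.card_pal hprop z
  have hps : ∀ z : V, MECaux.pal G f z ⊆ C := fun z => MECaux.pal_subset hprop z
  have hpair : ∀ x y : V, x ≠ y → ¬ G.Adj x y →
      C ⊆ MECaux.pal G f x ∪ MECaux.pal G f y := by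
    intro x y hxy hadj c hc
    rcases hmax.2 x y hxy hadj c hc with h | h
    · exact Finset.mem_union_left _ (MECaux.sees_iff_mem_pal.mp h)
    · exact Finset.mem_union_right _ (MECaux.sees_iff_mem_pal.mp h)
  have hdeg_ge : ∀ x y : V, x ≠ y → ¬ G.Adj x y → n ≤ G.degree x + G.degree y := by
    intro x y hxy hadj
    calc n = C.card := hC.symm
    _ ≤ (MECaux.pal G f x ∪ MECaux.pal G f y).card := Finset.card_le_card (hpair x y hxy hadj)
    _ ≤ (MECaux.pal G f x).card + (MECaux.pal G f y).card := Finset.card_union_le _ _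
    _ = G.degree x + G.degree y := by rw [hpc, hpc]
  have hab : G.degree u + G.degree v = n := le_antisymm (by omega) (hdeg_ge u v hne hnadj)
  set a := G.degree u with hadef
  set b := G.degree v with hbdef
  -- C is the disjoint union of the two palettes
  have hCuv : MECaux.pal G f u ∪ MECaux.pal G f v = C := by
    refine (Finset.eq_of_subset_of_card_le (hpair u v hne hnadj) ?_).symm
    calc (MECaux.pal G f u ∪ MECaux.pal G f v).card
        ≤ (MECaux.pal G f u).card + (MECaux.pal G f v).card := Finset.card_union_le _ _
    _ = a + b := by rw [hpc, hpc]
    _ = C.card := by rw [hab, hC]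
  have hdisj : Disjoint (MECaux.pal G f u) (MECaux.pal G f v) := by
    rw [Finset.disjoint_iff_inter_eq_empty, ← Finset.card_eq_zero]
    have h1 := Finset.card_union_add_card_inter (MECaux.pal G f u) (MECaux.pal G f v)
    rw [hCuv, hC, hpc, hpc] at h1
    omega
  -- the three parts
  set X := Finset.univ.filter (fun z => z ≠ v ∧ ¬ G.Adj v z) with hXdef
  set Y := Finset.univ.filter (fun z => z ≠ u ∧ ¬ G.Adj u z) with hYdef
  set Wst := Finset.univ.filter (fun z => G.Adj u z ∧ G.Adj v z) with hWdef
  have huX : u ∈ X := by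
    rw [hXdef]; simp only [Finset.mem_filter, Finset.mem_univ, true_and]
    exact ⟨hne, fun h => hnadj h.symm⟩
  have hvY : v ∈ Y := by
    rw [hYdef]; simp only [Finset.mem_filter, Finset.mem_univ, true_and]
    exact ⟨fun h => hne h.symm, hnadj⟩
  have hmemX : ∀ x, x ∈ X ↔ (x ≠ v ∧ ¬ G.Adj v x) := by
    intro x; rw [hXdef]; simp
  have hmemY : ∀ y, y ∈ Y ↔ (y ≠ u ∧ ¬ G.Adj u y) := by
    intro y; rw [hYdef]; simp
  have hmemW : ∀ w, w ∈ Wst ↔ (G.Adj u w ∧ G.Adj v w) := by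
    intro w; rw [hWdef]; simp
  -- palettes on X and Y
  have hpalX : ∀ x ∈ X, MECaux.pal G f u ⊆ MECaux.pal G f x := by
    intro x hx c hc
    rw [hmemX] at hx
    have hcC : c ∈ C := hps u hc
    have := hpair x v hx.1 (fun h => hx.2 h.symm) hcC
    rcases Finset.mem_union.mp this with h | h
    · exact h
    · exact absurd h (Finset.disjoint_left.mp hdisj hc)
  have hpalY : ∀ y ∈ Y, MECaux.pal G f v ⊆ MECaux.pal G f y := by
    intro y hy c hc
    rw [hmemY] at hy
    have hcC : c ∈ C := hps v hc
    have := hpair y u hy.1 (fun h => hy.2 h.symm) hcC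
    rcases Finset.mem_union.mp this with h | h
    · exact h
    · exact absurd h (Finset.disjoint_right.mp hdisj hc)
  -- disjointness of parts
  have hXYdisj : Disjoint X Y := by
    rw [Finset.disjoint_left]
    intro z hzX hzY
    have h1 : MECaux.pal G f u ⊆ MECaux.pal G f z := hpalX z hzX
    have h2 : MECaux.pal G f v ⊆ MECaux.pal G f z := hpalY z hzY
    have hsub : C ⊆ MECaux.pal G f z := by
      rw [← hCuv]; exact Finset.union_subset h1 h2
    have := Finset.card_le_card hsub
    rw [hC, hpc] at this
    exact absurd this (by have := G.degree_lt_card_verts z; omega)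
  have hXWdisj : Disjoint X Wst := by
    rw [Finset.disjoint_left]
    intro z hzX hzW
    exact ((hmemX z).mp hzX).2 ((hmemW z).mp hzW).2
  have hYWdisj : Disjoint Y Wst := by
    rw [Finset.disjoint_left]
    intro z hzY hzW
    exact ((hmemY z).mp hzY).2 ((hmemW z).mp hzW).1
  have hcoverV : X ∪ Y ∪ Wst = Finset.univ := by
    ext z
    simp only [Finset.mem_union, Finset.mem_univ, iff_true]
    rw [hmemX, hmemY, hmemW]
    by_cases h1 : z = v
    · subst h1; left; right; exact ⟨fun h => hne h.symm, hnadj⟩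
    by_cases h2 : z = u
    · subst h2; left; left; exact ⟨hne, fun h => hnadj h.symm⟩
    by_cases h3 : G.Adj v z
    · by_cases h4 : G.Adj u z
      · right; exact ⟨h4, h3⟩
      · left; right; exact ⟨h2, h4⟩
    · left; left; exact ⟨h1, h3⟩
  -- cardinalities
  have hYcard : Y.card + (a + 1) = n := by
    have hYeq : Y = Finset.univ \ insert u (G.neighborFinset u) := by
      ext z
      rw [hmemY]
      simp only [Finset.mem_sdiff, Finset.mem_univ, true_and, Finset.mem_insert,
        SimpleGraph.mem_neighborFinset, not_or]
    have := Finset.card_sdiff_add_card_eq_card (Finset.subset_univ (insert u (G.neighborFinset u)))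
    rw [← hYeq] at this
    rw [Finset.card_insert_of_notMem (by simp)] at this
    rw [SimpleGraph.card_neighborFinset_eq_degree, Finset.card_univ] at this
    omega
  have hXcard : X.card + (b + 1) = n := by
    have hXeq : X = Finset.univ \ insert v (G.neighborFinset v) := by
      ext z
      rw [hmemX]
      simp only [Finset.mem_sdiff, Finset.mem_univ, true_and, Finset.mem_insert,
        SimpleGraph.mem_neighborFinset, not_or]
    have := Finset.card_sdiff_add_card_eq_card (Finset.subset_univ (insert v (G.neighborFinset v)))
    rw [← hXeq] at this
    rw [Finset.card_insert_of_notMem (by simp)] at this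
    rw [SimpleGraph.card_neighborFinset_eq_degree, Finset.card_univ] at this
    omega
  have hWcard : Wst.card = 2 := by
    have h1 : (X ∪ Y ∪ Wst).card = n := by rw [hcoverV, Finset.card_univ]
    rw [Finset.card_union_of_disjoint (by
      rw [Finset.disjoint_union_left]; exact ⟨hXWdisj, hYWdisj⟩),
      Finset.card_union_of_disjoint hXYdisj] at h1
    omega
  obtain ⟨w1, w2, hw12, hWpair⟩ := Finset.card_eq_two.mp hWcard
  have hw1W : w1 ∈ Wst := by rw [hWpair]; simp
  have hw2W : w2 ∈ Wst := by rw [hWpair]; simp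
  have ha2 : 2 ≤ a := by
    have hsub : Wst ⊆ G.neighborFinset u := by
      intro w hw
      rw [SimpleGraph.mem_neighborFinset]
      exact ((hmemW w).mp hw).1
    have := Finset.card_le_card hsub
    rw [hWcard, SimpleGraph.card_neighborFinset_eq_degree] at this
    omega
  have hb2 : 2 ≤ b := by
    have hsub : Wst ⊆ G.neighborFinset v := by
      intro w hw
      rw [SimpleGraph.mem_neighborFinset]
      exact ((hmemW w).mp hw).2
    have := Finset.card_le_card hsub
    rw [hWcard, SimpleGraph.card_neighborFinset_eq_degree] at this
    omega
  -- degrees on X and Y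
  have hdegX : ∀ x ∈ X, G.degree x = a + (MECaux.pal G f x ∩ MECaux.pal G f v).card := by
    intro x hx
    have hsplit : MECaux.pal G f x = MECaux.pal G f u ∪ (MECaux.pal G f x ∩ MECaux.pal G f v) := by
      ext c
      simp only [Finset.mem_union, Finset.mem_inter]
      constructor
      · intro hc
        have hcC : c ∈ C := hps x hc
        rw [← hCuv] at hcC
        rcases Finset.mem_union.mp hcC with h | h
        · exact Or.inl h
        · exact Or.inr ⟨hc, h⟩
      · rintro (h | ⟨h, -⟩)
        · exact hpalX x hx h
        · exact h
    have hd : Disjoint (MECaux.pal G f u) (MECaux.pal G f x ∩ MECaux.pal G f v) :=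
      hdisj.mono_right Finset.inter_subset_right
    have hcc := congrArg Finset.card hsplit
    rw [Finset.card_union_of_disjoint hd, hpc x, hpc u] at hcc
    exact hcc
  have hdegY : ∀ y ∈ Y, G.degree y = b + (MECaux.pal G f y ∩ MECaux.pal G f u).card := by
    intro y hy
    have hsplit : MECaux.pal G f y = MECaux.pal G f v ∪ (MECaux.pal G f y ∩ MECaux.pal G f u) := by
      ext c
      simp only [Finset.mem_union, Finset.mem_inter]
      constructor
      · intro hc
        have hcC : c ∈ C := hps y hc
        rw [← hCuv] at hcC
        rcases Finset.mem_union.mp hcC with h | h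
        · exact Or.inr ⟨hc, h⟩
        · exact Or.inl h
      · rintro (h | ⟨h, -⟩)
        · exact hpalY y hy h
        · exact h
    have hd : Disjoint (MECaux.pal G f v) (MECaux.pal G f y ∩ MECaux.pal G f u) :=
      hdisj.symm.mono_right Finset.inter_subset_right
    have hcc := congrArg Finset.card hsplit
    rw [Finset.card_union_of_disjoint hd, hpc y, hpc v] at hcc
    exact hcc
  -- adjacency counts
  have hsplitdeg : ∀ z : V, G.degree z =
      (X.filter (fun t => G.Adj z t)).card + (Y.filter (fun t => G.Adj z t)).card
        + (Wst.filter (fun t => G.Adj z t)).card := by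
    intro z
    have h1 : G.neighborFinset z = Finset.univ.filter (fun t => G.Adj z t) := by
      ext t; simp
    have hd1 : Disjoint (X.filter (fun t => G.Adj z t)) (Y.filter (fun t => G.Adj z t)) :=
      Finset.disjoint_filter_filter hXYdisj
    have hd2 : Disjoint ((X.filter (fun t => G.Adj z t)) ∪ (Y.filter (fun t => G.Adj z t)))
        (Wst.filter (fun t => G.Adj z t)) := by
      rw [Finset.disjoint_union_left]
      exact ⟨Finset.disjoint_filter_filter hXWdisj, Finset.disjoint_filter_filter hYWdisj⟩
    rw [← SimpleGraph.card_neighborFinset_eq_degree, h1, ← hcoverV,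
      Finset.filter_union, Finset.filter_union,
      Finset.card_union_of_disjoint hd2, Finset.card_union_of_disjoint hd1]
  -- sums over X and Y of degrees
  set SX := ∑ x ∈ X, (MECaux.pal G f x ∩ MECaux.pal G f v).card with hSXdef
  set SY := ∑ y ∈ Y, (MECaux.pal G f y ∩ MECaux.pal G f u).card with hSYdef
  have hsumdegX : ∑ x ∈ X, G.degree x = a * X.card + SX := by
    rw [Finset.sum_congr rfl hdegX, Finset.sum_add_distrib, Finset.sum_const,
      smul_eq_mul, mul_comm]
  have hsumdegY : ∑ y ∈ Y, G.degree y = b * Y.card + SY := by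
    rw [Finset.sum_congr rfl hdegY, Finset.sum_add_distrib, Finset.sum_const,
      smul_eq_mul, mul_comm]
  -- big split equations
  have hEXsplit : ∑ x ∈ X, G.degree x =
      (∑ x ∈ X, (X.filter (fun t => G.Adj x t)).card)
      + (∑ x ∈ X, (Y.filter (fun t => G.Adj x t)).card)
      + (∑ x ∈ X, (Wst.filter (fun t => G.Adj x t)).card) := by
    rw [Finset.sum_congr rfl (fun x _ => hsplitdeg x), Finset.sum_add_distrib,
      Finset.sum_add_distrib]
  have hEYsplit : ∑ y ∈ Y, G.degree y =
      (∑ y ∈ Y, (X.filter (fun t => G.Adj y t)).card)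
      + (∑ y ∈ Y, (Y.filter (fun t => G.Adj y t)).card)
      + (∑ y ∈ Y, (Wst.filter (fun t => G.Adj y t)).card) := by
    rw [Finset.sum_congr rfl (fun y _ => hsplitdeg y), Finset.sum_add_distrib,
      Finset.sum_add_distrib]
  -- swaps
  have hswapXY : ∑ y ∈ Y, (X.filter (fun t => G.Adj y t)).card
      = ∑ x ∈ X, (Y.filter (fun t => G.Adj x t)).card := by
    rw [MECaux.sum_card_filter_swap Y X (fun y x => G.Adj y x)]
    apply Finset.sum_congr rfl
    intro x _
    congr 1
    apply Finset.filter_congr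
    intro t _
    rw [G.adj_comm]
  have hswapXW : ∑ x ∈ X, (Wst.filter (fun t => G.Adj x t)).card
      = (X.filter (fun t => G.Adj w1 t)).card + (X.filter (fun t => G.Adj w2 t)).card := by
    rw [MECaux.sum_card_filter_swap X Wst (fun x w => G.Adj x w)]
    rw [hWpair, Finset.sum_pair hw12]
    congr 1 <;> (congr 1; apply Finset.filter_congr; intro t _; rw [G.adj_comm])
  have hswapYW : ∑ y ∈ Y, (Wst.filter (fun t => G.Adj y t)).card
      = (Y.filter (fun t => G.Adj w1 t)).card + (Y.filter (fun t => G.Adj w2 t)).card := by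
    rw [MECaux.sum_card_filter_swap Y Wst (fun y w => G.Adj y w)]
    rw [hWpair, Finset.sum_pair hw12]
    congr 1 <;> (congr 1; apply Finset.filter_congr; intro t _; rw [G.adj_comm])
  have hwsplit : G.degree w1 + G.degree w2 =
      ((X.filter (fun t => G.Adj w1 t)).card + (X.filter (fun t => G.Adj w2 t)).card)
      + ((Y.filter (fun t => G.Adj w1 t)).card + (Y.filter (fun t => G.Adj w2 t)).card)
      + ((Wst.filter (fun t => G.Adj w1 t)).card + (Wst.filter (fun t => G.Adj w2 t)).card) := by
    rw [hsplitdeg w1, hsplitdeg w2]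
    ring
  have halphaval : ∀ w w' : V, w ≠ w' → Wst = {w, w'} →
      (Wst.filter (fun t => G.Adj w t)).card = if G.Adj w w' then 1 else 0 := by
    intro w w' hww hWp
    rw [hWp]
    by_cases h : G.Adj w w'
    · rw [if_pos h]
      have : ({w, w'} : Finset V).filter (fun t => G.Adj w t) = {w'} := by
        ext t
        simp only [Finset.mem_filter, Finset.mem_insert, Finset.mem_singleton]
        constructor
        · rintro ⟨rfl | rfl, hadj⟩
          · exact absurd hadj (G.irrefl)
          · rfl
        · rintro rfl; exact ⟨Or.inr rfl, h⟩
      rw [this, Finset.card_singleton]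
    · rw [if_neg h]
      rw [Finset.card_eq_zero]
      ext t
      simp only [Finset.mem_filter, Finset.mem_insert, Finset.mem_singleton,
        Finset.notMem_empty, iff_false, not_and]
      rintro (rfl | rfl)
      · exact fun hadj => G.irrefl hadj
      · exact fun hadj => h hadj
  have halpha1 : (Wst.filter (fun t => G.Adj w1 t)).card = if G.Adj w1 w2 then 1 else 0 :=
    halphaval w1 w2 hw12 hWpair
  have halpha2 : (Wst.filter (fun t => G.Adj w2 t)).card = if G.Adj w1 w2 then 1 else 0 := by
    rw [halphaval w2 w1 (Ne.symm hw12) (by rw [hWpair, Finset.pair_comm])]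
    by_cases h : G.Adj w1 w2
    · rw [if_pos h, if_pos (h.symm)]
    · rw [if_neg h, if_neg (fun hh => h hh.symm)]
  -- room bounds
  have hX1 : X.card + 1 = a := by omega
  have hY1 : Y.card + 1 = b := by omega
  have hXX_le : ∀ x ∈ X, (X.filter (fun t => G.Adj x t)).card + 2 ≤ a := by
    intro x hx
    have hsub : X.filter (fun t => G.Adj x t) ⊆ X.erase x := by
      intro t ht
      rw [Finset.mem_filter] at ht
      exact Finset.mem_erase.mpr ⟨fun h => G.irrefl (h ▸ ht.2), ht.1⟩
    have := Finset.card_le_card hsub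
    rw [Finset.card_erase_of_mem hx] at this
    have hx1 : 1 ≤ X.card := Finset.card_pos.mpr ⟨x, hx⟩
    omega
  have hYY_le : ∀ y ∈ Y, (Y.filter (fun t => G.Adj y t)).card + 2 ≤ b := by
    intro y hy
    have hsub : Y.filter (fun t => G.Adj y t) ⊆ Y.erase y := by
      intro t ht
      rw [Finset.mem_filter] at ht
      exact Finset.mem_erase.mpr ⟨fun h => G.irrefl (h ▸ ht.2), ht.1⟩
    have := Finset.card_le_card hsub
    rw [Finset.card_erase_of_mem hy] at this
    have hy1 : 1 ≤ Y.card := Finset.card_pos.mpr ⟨y, hy⟩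
    omega
  have hsumXX : (∑ x ∈ X, (X.filter (fun t => G.Adj x t)).card) + 2 * X.card ≤ a * X.card := by
    calc (∑ x ∈ X, (X.filter (fun t => G.Adj x t)).card) + 2 * X.card
        = ∑ x ∈ X, ((X.filter (fun t => G.Adj x t)).card + 2) := by
          rw [Finset.sum_add_distrib, Finset.sum_const, smul_eq_mul, mul_comm]
    _ ≤ ∑ x ∈ X, a := Finset.sum_le_sum hXX_le
    _ = a * X.card := by rw [Finset.sum_const, smul_eq_mul, mul_comm]
  have hsumYY : (∑ y ∈ Y, (Y.filter (fun t => G.Adj y t)).card) + 2 * Y.card ≤ b * Y.card := by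
    calc (∑ y ∈ Y, (Y.filter (fun t => G.Adj y t)).card) + 2 * Y.card
        = ∑ y ∈ Y, ((Y.filter (fun t => G.Adj y t)).card + 2) := by
          rw [Finset.sum_add_distrib, Finset.sum_const, smul_eq_mul, mul_comm]
    _ ≤ ∑ y ∈ Y, b := Finset.sum_le_sum hYY_le
    _ = b * Y.card := by rw [Finset.sum_const, smul_eq_mul, mul_comm]
  -- color split of X→Y edges
  have hcolC : ∀ z t : V, G.Adj z t → f s(z,t) ∈ C := by
    intro z t hadj
    exact hprop.1 _ (G.mem_edgeSet.mpr hadj)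
  have hDAxY_split : ∀ x ∈ X,
      (Y.filter (fun t => G.Adj x t)).card =
        (Y.filter (fun t => G.Adj x t ∧ f s(x,t) ∈ MECaux.pal G f v)).card
        + (Y.filter (fun t => G.Adj x t ∧ f s(x,t) ∈ MECaux.pal G f u)).card := by
    intro x _
    have hdisjf : Disjoint (Y.filter (fun t => G.Adj x t ∧ f s(x,t) ∈ MECaux.pal G f v))
        (Y.filter (fun t => G.Adj x t ∧ f s(x,t) ∈ MECaux.pal G f u)) := by
      rw [Finset.disjoint_left]
      intro t h1 h2
      rw [Finset.mem_filter] at h1 h2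
      exact Finset.disjoint_right.mp hdisj h1.2.2 h2.2.2
    rw [← Finset.card_union_of_disjoint hdisjf]
    congr 1
    ext t
    simp only [Finset.mem_union, Finset.mem_filter]
    constructor
    · rintro ⟨htY, hadj⟩
      have := hcolC x t hadj
      rw [← hCuv] at this
      rcases Finset.mem_union.mp this with h | h
      · exact Or.inr ⟨htY, hadj, h⟩
      · exact Or.inl ⟨htY, hadj, h⟩
    · rintro (⟨htY, hadj, -⟩ | ⟨htY, hadj, -⟩) <;> exact ⟨htY, hadj⟩
  have hsumDAxY : (∑ x ∈ X, (Y.filter (fun t => G.Adj x t)).card)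
      = (∑ x ∈ X, (Y.filter (fun t => G.Adj x t ∧ f s(x,t) ∈ MECaux.pal G f v)).card)
      + (∑ x ∈ X, (Y.filter (fun t => G.Adj x t ∧ f s(x,t) ∈ MECaux.pal G f u)).card) := by
    rw [← Finset.sum_add_distrib]
    exact Finset.sum_congr rfl hDAxY_split
  have hrX_le : ∀ x ∈ X,
      (Y.filter (fun t => G.Adj x t ∧ f s(x,t) ∈ MECaux.pal G f v)).card
        ≤ (MECaux.pal G f x ∩ MECaux.pal G f v).card := by
    intro x _
    rw [← MECaux.card_colored hprop x (MECaux.pal G f v)]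
    apply Finset.card_le_card
    intro t ht
    rw [Finset.mem_filter] at ht ⊢
    exact ⟨SimpleGraph.mem_neighborFinset _ _ _ |>.mpr ht.2.1, ht.2.2⟩
  have hsumrX_le : (∑ x ∈ X, (Y.filter (fun t => G.Adj x t ∧ f s(x,t) ∈ MECaux.pal G f v)).card) ≤ SX :=
    Finset.sum_le_sum hrX_le
  have hbY_le : ∀ y ∈ Y,
      (X.filter (fun t => G.Adj y t ∧ f s(y,t) ∈ MECaux.pal G f u)).card
        ≤ (MECaux.pal G f y ∩ MECaux.pal G f u).card := by
    intro y _
    rw [← MECaux.card_colored hprop y (MECaux.pal G f u)]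
    apply Finset.card_le_card
    intro t ht
    rw [Finset.mem_filter] at ht ⊢
    exact ⟨SimpleGraph.mem_neighborFinset _ _ _ |>.mpr ht.2.1, ht.2.2⟩
  have hswapB : (∑ x ∈ X, (Y.filter (fun t => G.Adj x t ∧ f s(x,t) ∈ MECaux.pal G f u)).card)
      = (∑ y ∈ Y, (X.filter (fun t => G.Adj y t ∧ f s(y,t) ∈ MECaux.pal G f u)).card) := by
    rw [MECaux.sum_card_filter_swap X Y (fun x y => G.Adj x y ∧ f s(x,y) ∈ MECaux.pal G f u)]
    apply Finset.sum_congr rfl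
    intro y _
    congr 1
    apply Finset.filter_congr
    intro t _
    rw [G.adj_comm, Sym2.eq_swap (a := t) (b := y)]
  have hsumbY_le : (∑ x ∈ X, (Y.filter (fun t => G.Adj x t ∧ f s(x,t) ∈ MECaux.pal G f u)).card) ≤ SY := by
    rw [hswapB]
    exact Finset.sum_le_sum hbY_le
  -- total degree sum
  have hE2 : 2 * G.edgeFinset.card = (a * X.card + SX) + (b * Y.card + SY)
      + (G.degree w1 + G.degree w2) := by
    rw [← SimpleGraph.sum_degrees_eq_twice_card_edges]
    have hdu : Disjoint (X ∪ Y) Wst := by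
      rw [Finset.disjoint_union_left]; exact ⟨hXWdisj, hYWdisj⟩
    rw [← hcoverV, Finset.sum_union hdu, Finset.sum_union hXYdisj,
      hsumdegX, hsumdegY, hWpair, Finset.sum_pair hw12]
  -- uniqueness of a color at a vertex
  have huniq : ∀ z t t' : V, G.Adj z t → G.Adj z t' → f s(z,t) = f s(z,t') → t = t' := by
    intro z t t' h1 h2 heq
    by_contra hne'
    refine hprop.2 s(z,t) (G.mem_edgeSet.mpr h1) s(z,t') (G.mem_edgeSet.mpr h2) ?_
      ⟨z, by simp, by simp⟩ heq
    intro hee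
    rw [Sym2.eq_iff] at hee
    rcases hee with ⟨-, h⟩ | ⟨h, -⟩
    · exact hne' h
    · exact (G.ne_of_adj h2) h
  -- seers of any color form an even set
  have hseer : ∀ c : ℕ, Even ((Finset.univ.filter (fun z => c ∈ MECaux.pal G f z)).card) := by
    intro c
    set g : V → V := fun z => if h : ∃ t, G.Adj z t ∧ f s(z,t) = c then h.choose else z with hg
    have hgspec : ∀ z : V, c ∈ MECaux.pal G f z → G.Adj z (g z) ∧ f s(z, g z) = c := by
      intro z hz
      rcases MECaux.mem_pal.mp hz with ⟨t, hadj, hcol⟩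
      have hex : ∃ t, G.Adj z t ∧ f s(z,t) = c := ⟨t, hadj, hcol⟩
      rw [hg]
      simp only [dif_pos hex]
      exact hex.choose_spec
    apply MECaux.even_card_of_invol _ g
    · intro z hz
      rw [Finset.mem_filter] at hz ⊢
      obtain ⟨hadj, hcol⟩ := hgspec z hz.2
      refine ⟨Finset.mem_univ _, MECaux.mem_pal.mpr ⟨z, hadj.symm, ?_⟩⟩
      rw [Sym2.eq_swap]; exact hcol
    · intro z hz
      rw [Finset.mem_filter] at hz
      obtain ⟨hadj, hcol⟩ := hgspec z hz.2
      have hz2 : c ∈ MECaux.pal G f (g z) :=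
        MECaux.mem_pal.mpr ⟨z, hadj.symm, by rw [Sym2.eq_swap]; exact hcol⟩
      obtain ⟨hadj2, hcol2⟩ := hgspec (g z) hz2
      have hzc : f s(g z, z) = c := by rw [Sym2.eq_swap]; exact hcol
      exact huniq (g z) (g (g z)) z hadj2 hadj.symm (hcol2.trans hzc.symm)
    · intro z hz
      rw [Finset.mem_filter] at hz
      obtain ⟨hadj, -⟩ := hgspec z hz.2
      exact fun h => G.irrefl (h ▸ hadj)
  have hseersplit : ∀ c : ℕ, (Finset.univ.filter (fun z => c ∈ MECaux.pal G f z)).card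
      = (X.filter (fun z => c ∈ MECaux.pal G f z)).card
        + (Y.filter (fun z => c ∈ MECaux.pal G f z)).card
        + (Wst.filter (fun z => c ∈ MECaux.pal G f z)).card := by
    intro c
    have hd1 : Disjoint (X.filter (fun z => c ∈ MECaux.pal G f z))
        (Y.filter (fun z => c ∈ MECaux.pal G f z)) := Finset.disjoint_filter_filter hXYdisj
    have hd2 : Disjoint ((X.filter (fun z => c ∈ MECaux.pal G f z)) ∪ (Y.filter (fun z => c ∈ MECaux.pal G f z)))
        (Wst.filter (fun z => c ∈ MECaux.pal G f z)) := by
      rw [Finset.disjoint_union_left]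
      exact ⟨Finset.disjoint_filter_filter hXWdisj, Finset.disjoint_filter_filter hYWdisj⟩
    rw [← hcoverV, Finset.filter_union, Finset.filter_union,
      Finset.card_union_of_disjoint hd2, Finset.card_union_of_disjoint hd1]
  -- the key inequality
  have hkey : 2 * n ≤ SX + SY + (G.degree w1 + G.degree w2) + 2 := by
    by_contra hMlt
    push_neg at hMlt
    set A1 := ∑ x ∈ X, (X.filter (fun t => G.Adj x t)).card with hA1def
    set A2 := ∑ x ∈ X, (Y.filter (fun t => G.Adj x t)).card with hA2def
    set A3 := ∑ x ∈ X, (Wst.filter (fun t => G.Adj x t)).card with hA3def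
    set B2 := ∑ y ∈ Y, (Y.filter (fun t => G.Adj y t)).card with hB2def
    set B3 := ∑ y ∈ Y, (Wst.filter (fun t => G.Adj y t)).card with hB3def
    set R := ∑ x ∈ X, (Y.filter (fun t => G.Adj x t ∧ f s(x,t) ∈ MECaux.pal G f v)).card with hRdef
    set Bl := ∑ x ∈ X, (Y.filter (fun t => G.Adj x t ∧ f s(x,t) ∈ MECaux.pal G f u)).card with hBldef
    set PX := a * X.card with hPXdef
    set PY := b * Y.card with hPYdef
    have hPXeven : ∃ p, PX = p + p := by
      rcases Nat.even_mul_succ_self X.card with ⟨p, hp⟩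
      exact ⟨p, by rw [hPXdef, ← hX1, mul_comm]; exact hp⟩
    have hPYeven : ∃ q, PY = q + q := by
      rcases Nat.even_mul_succ_self Y.card with ⟨q, hq⟩
      exact ⟨q, by rw [hPYdef, ← hY1, mul_comm]; exact hq⟩
    obtain ⟨p, hp⟩ := hPXeven
    obtain ⟨q, hq⟩ := hPYeven
    have halphaeq : (Wst.filter (fun t => G.Adj w1 t)).card
        = (Wst.filter (fun t => G.Adj w2 t)).card := by rw [halpha1, halpha2]
    have hαle : (Wst.filter (fun t => G.Adj w1 t)).card ≤ 1 := by
      rw [halpha1]; split <;> omega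
    have hmain : (Wst.filter (fun t => G.Adj w1 t)).card = 0 ∧ R = SX ∧ Bl = SY
        ∧ A1 + 2 * X.card = PX ∧ B2 + 2 * Y.card = PY := by
      omega
    obtain ⟨hα0, hReq, hBleq, hA1eq, hB2eq⟩ := hmain
    have hnadjW : ¬ G.Adj w1 w2 := by
      intro hadj
      rw [halpha1, if_pos hadj] at hα0
      exact one_ne_zero hα0
    -- pointwise tightness on X side
    have hrXsum : ∑ x ∈ X, (Y.filter (fun t => G.Adj x t ∧ f s(x,t) ∈ MECaux.pal G f v)).card
        = ∑ x ∈ X, (MECaux.pal G f x ∩ MECaux.pal G f v).card := by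
      rw [← hRdef, hReq, hSXdef]
    have hrXpt : ∀ x ∈ X,
        (Y.filter (fun t => G.Adj x t ∧ f s(x,t) ∈ MECaux.pal G f v)).card
          = (MECaux.pal G f x ∩ MECaux.pal G f v).card :=
      (Finset.sum_eq_sum_iff_of_le hrX_le).mp hrXsum
    have hbYsum : ∑ y ∈ Y, (X.filter (fun t => G.Adj y t ∧ f s(y,t) ∈ MECaux.pal G f u)).card
        = ∑ y ∈ Y, (MECaux.pal G f y ∩ MECaux.pal G f u).card := by
      rw [← hswapB, hBleq, hSYdef]
    have hbYpt : ∀ y ∈ Y,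
        (X.filter (fun t => G.Adj y t ∧ f s(y,t) ∈ MECaux.pal G f u)).card
          = (MECaux.pal G f y ∩ MECaux.pal G f u).card :=
      (Finset.sum_eq_sum_iff_of_le hbY_le).mp hbYsum
    have hredX : ∀ x ∈ X, ∀ t : V, G.Adj x t → f s(x,t) ∈ MECaux.pal G f v → t ∈ Y := by
      intro x hx t hadj hcol
      have hsub : Y.filter (fun t => G.Adj x t ∧ f s(x,t) ∈ MECaux.pal G f v)
          ⊆ (G.neighborFinset x).filter (fun t => f s(x,t) ∈ MECaux.pal G f v) := by
        intro s hs
        rw [Finset.mem_filter] at hs ⊢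
        exact ⟨(SimpleGraph.mem_neighborFinset _ _ _).mpr hs.2.1, hs.2.2⟩
      have hcards : ((G.neighborFinset x).filter (fun t => f s(x,t) ∈ MECaux.pal G f v)).card
          ≤ (Y.filter (fun t => G.Adj x t ∧ f s(x,t) ∈ MECaux.pal G f v)).card := by
        rw [MECaux.card_colored hprop x (MECaux.pal G f v), hrXpt x hx]
      have hEqset := Finset.eq_of_subset_of_card_le hsub hcards
      have ht : t ∈ (G.neighborFinset x).filter (fun t => f s(x,t) ∈ MECaux.pal G f v) :=
        Finset.mem_filter.mpr ⟨(SimpleGraph.mem_neighborFinset _ _ _).mpr hadj, hcol⟩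
      rw [← hEqset] at ht
      exact (Finset.mem_filter.mp ht).1
    have hblueY : ∀ y ∈ Y, ∀ t : V, G.Adj y t → f s(y,t) ∈ MECaux.pal G f u → t ∈ X := by
      intro y hy t hadj hcol
      have hsub : X.filter (fun t => G.Adj y t ∧ f s(y,t) ∈ MECaux.pal G f u)
          ⊆ (G.neighborFinset y).filter (fun t => f s(y,t) ∈ MECaux.pal G f u) := by
        intro s hs
        rw [Finset.mem_filter] at hs ⊢
        exact ⟨(SimpleGraph.mem_neighborFinset _ _ _).mpr hs.2.1, hs.2.2⟩
      have hcards : ((G.neighborFinset y).filter (fun t => f s(y,t) ∈ MECaux.pal G f u)).card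
          ≤ (X.filter (fun t => G.Adj y t ∧ f s(y,t) ∈ MECaux.pal G f u)).card := by
        rw [MECaux.card_colored hprop y (MECaux.pal G f u), hbYpt y hy]
      have hEqset := Finset.eq_of_subset_of_card_le hsub hcards
      have ht : t ∈ (G.neighborFinset y).filter (fun t => f s(y,t) ∈ MECaux.pal G f u) :=
        Finset.mem_filter.mpr ⟨(SimpleGraph.mem_neighborFinset _ _ _).mpr hadj, hcol⟩
      rw [← hEqset] at ht
      exact (Finset.mem_filter.mp ht).1
    -- palettes of the w's, via their edges
    have hmemXYW : ∀ t : V, t ∈ X ∨ t ∈ Y ∨ t ∈ Wst := by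
      intro t
      have : t ∈ X ∪ Y ∪ Wst := by rw [hcoverV]; exact Finset.mem_univ t
      rcases Finset.mem_union.mp this with h | h
      · rcases Finset.mem_union.mp h with h | h
        · exact Or.inl h
        · exact Or.inr (Or.inl h)
      · exact Or.inr (Or.inr h)
    have hWpal : ∀ w : V, w ∈ Wst →
        ((MECaux.pal G f w ∩ MECaux.pal G f v).card = (Y.filter (fun t => G.Adj w t)).card
        ∧ (MECaux.pal G f w ∩ MECaux.pal G f u).card = (X.filter (fun t => G.Adj w t)).card) := by
      intro w hwW
      have hwadj : ¬ G.Adj w1 w2 := hnadjW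
      have hwnadj : ∀ t, t ∈ Wst → ¬ G.Adj w t := by
        intro t htW hadj
        rw [hWpair] at hwW htW
        rcases Finset.mem_insert.mp hwW with rfl | hwW' <;>
          rcases Finset.mem_insert.mp htW with rfl | htW'
        · exact G.irrefl hadj
        · rw [Finset.mem_singleton] at htW'; subst htW'; exact hnadjW hadj
        · rw [Finset.mem_singleton] at hwW'; subst hwW'; exact hnadjW hadj.symm
        · rw [Finset.mem_singleton] at hwW' htW'; subst hwW'; subst htW'; exact G.irrefl hadj
      constructor
      · rw [← MECaux.card_colored hprop w (MECaux.pal G f v)]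
        congr 1
        ext t
        simp only [Finset.mem_filter, SimpleGraph.mem_neighborFinset]
        constructor
        · rintro ⟨hadj, hcol⟩
          refine ⟨?_, hadj⟩
          rcases hmemXYW t with htX | htY | htW
          · exfalso
            have : f s(t, w) ∈ MECaux.pal G f v := by rw [Sym2.eq_swap]; exact hcol
            have hwY := hredX t htX w hadj.symm this
            exact Finset.disjoint_right.mp hYWdisj hwW hwY
          · exact htY
          · exact absurd hadj (hwnadj t htW)
        · rintro ⟨htY, hadj⟩
          refine ⟨hadj, ?_⟩
          have hcC := hcolC w t hadj
          rw [← hCuv] at hcC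
          rcases Finset.mem_union.mp hcC with h | h
          · exfalso
            have : f s(t, w) ∈ MECaux.pal G f u := by rw [Sym2.eq_swap]; exact h
            have hwX := hblueY t htY w hadj.symm this
            exact Finset.disjoint_right.mp hXWdisj hwW hwX
          · exact h
      · rw [← MECaux.card_colored hprop w (MECaux.pal G f u)]
        congr 1
        ext t
        simp only [Finset.mem_filter, SimpleGraph.mem_neighborFinset]
        constructor
        · rintro ⟨hadj, hcol⟩
          refine ⟨?_, hadj⟩
          rcases hmemXYW t with htX | htY | htW
          · exact htX
          · exfalso
            have : f s(t, w) ∈ MECaux.pal G f u := by rw [Sym2.eq_swap]; exact hcol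
            have hwX := hblueY t htY w hadj.symm this
            exact Finset.disjoint_right.mp hXWdisj hwW hwX
          · exact absurd hadj (hwnadj t htW)
        · rintro ⟨htX, hadj⟩
          refine ⟨hadj, ?_⟩
          have hcC := hcolC w t hadj
          rw [← hCuv] at hcC
          rcases Finset.mem_union.mp hcC with h | h
          · exact h
          · exfalso
            have : f s(t, w) ∈ MECaux.pal G f v := by rw [Sym2.eq_swap]; exact h
            have hwY := hredX t htX w hadj.symm this
            exact Finset.disjoint_right.mp hYWdisj hwW hwY
    obtain ⟨hσ1, hτ1⟩ := hWpal w1 hw1W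
    obtain ⟨hσ2, hτ2⟩ := hWpal w2 hw2W
    have hσnum : (Y.filter (fun t => G.Adj w1 t)).card + (Y.filter (fun t => G.Adj w2 t)).card
        + SX + 2 = 2 * b := by omega
    have hτnum : (X.filter (fun t => G.Adj w1 t)).card + (X.filter (fun t => G.Adj w2 t)).card
        + SY + 2 = 2 * a := by omega
    have hcovW : C ⊆ MECaux.pal G f w1 ∪ MECaux.pal G f w2 := hpair w1 w2 hw12 hnadjW
    rcases Nat.even_or_odd b with hbev | hbodd
    · -- b even, a odd : work on the u side
      have haodd : Odd a := by
        rcases hOdd with ⟨k, hk⟩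
        rcases hbev with ⟨m, hm'⟩
        exact Nat.odd_iff.mpr (by omega)
      have hTu : ∑ c ∈ MECaux.pal G f u, (Y.filter (fun z => c ∈ MECaux.pal G f z)).card = SY := by
        simp only [Finset.card_filter]
        rw [Finset.sum_comm]
        rw [hSYdef]
        apply Finset.sum_congr rfl
        intro y _
        rw [← Finset.card_filter, Finset.filter_mem_eq_inter, Finset.inter_comm]
      refine MECaux.bad_abstract (MECaux.pal G f u) (MECaux.pal G f w1) (MECaux.pal G f w2)
        a SY (fun c => (Y.filter (fun z => c ∈ MECaux.pal G f z)).card)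
        haodd (hpc u) (fun c hc => hcovW (hps u hc)) (by rw [hτ1, hτ2]; exact hτnum) hTu ?_
      intro c hc hnb
      show Odd ((Y.filter (fun z => c ∈ MECaux.pal G f z)).card)
      have hev := hseer c
      rw [hseersplit c] at hev
      have hXfull : X.filter (fun z => c ∈ MECaux.pal G f z) = X :=
        Finset.filter_true_of_mem (fun x hx => hpalX x hx hc)
      have hWone : (Wst.filter (fun z => c ∈ MECaux.pal G f z)).card = 1 := by
        have hcov := hcovW (hps u hc)
        rcases Finset.mem_union.mp hcov with h1 | h2
        · have heq1 : Wst.filter (fun z => c ∈ MECaux.pal G f z) = {w1} := by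
            rw [hWpair]
            ext z
            simp only [Finset.mem_filter, Finset.mem_insert, Finset.mem_singleton]
            constructor
            · rintro ⟨rfl | rfl, hcz⟩
              · rfl
              · exact absurd ⟨h1, hcz⟩ hnb
            · rintro rfl
              exact ⟨Or.inl rfl, h1⟩
          rw [heq1, Finset.card_singleton]
        · have hnc1 : c ∉ MECaux.pal G f w1 := fun h1 => hnb ⟨h1, h2⟩
          have heq1 : Wst.filter (fun z => c ∈ MECaux.pal G f z) = {w2} := by
            rw [hWpair]
            ext z
            simp only [Finset.mem_filter, Finset.mem_insert, Finset.mem_singleton]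
            constructor
            · rintro ⟨rfl | rfl, hcz⟩
              · exact absurd hcz hnc1
              · rfl
            · rintro rfl
              exact ⟨Or.inr rfl, h2⟩
          rw [heq1, Finset.card_singleton]
      rw [hXfull, hWone] at hev
      rcases haodd with ⟨k, hk⟩
      rcases hev with ⟨m, hm'⟩
      exact Nat.odd_iff.mpr (by omega)
    · -- b odd : work on the v side
      have hTv : ∑ c ∈ MECaux.pal G f v, (X.filter (fun z => c ∈ MECaux.pal G f z)).card = SX := by
        simp only [Finset.card_filter]
        rw [Finset.sum_comm]
        rw [hSXdef]
        apply Finset.sum_congr rfl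
        intro x _
        rw [← Finset.card_filter, Finset.filter_mem_eq_inter, Finset.inter_comm]
      refine MECaux.bad_abstract (MECaux.pal G f v) (MECaux.pal G f w1) (MECaux.pal G f w2)
        b SX (fun c => (X.filter (fun z => c ∈ MECaux.pal G f z)).card)
        hbodd (hpc v) (fun c hc => hcovW (hps v hc)) (by rw [hσ1, hσ2]; exact hσnum) hTv ?_
      intro c hc hnb
      show Odd ((X.filter (fun z => c ∈ MECaux.pal G f z)).card)
      have hev := hseer c
      rw [hseersplit c] at hev
      have hYfull : Y.filter (fun z => c ∈ MECaux.pal G f z) = Y :=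
        Finset.filter_true_of_mem (fun y hy => hpalY y hy hc)
      have hWone : (Wst.filter (fun z => c ∈ MECaux.pal G f z)).card = 1 := by
        have hcov := hcovW (hps v hc)
        rcases Finset.mem_union.mp hcov with h1 | h2
        · have heq1 : Wst.filter (fun z => c ∈ MECaux.pal G f z) = {w1} := by
            rw [hWpair]
            ext z
            simp only [Finset.mem_filter, Finset.mem_insert, Finset.mem_singleton]
            constructor
            · rintro ⟨rfl | rfl, hcz⟩
              · rfl
              · exact absurd ⟨h1, hcz⟩ hnb
            · rintro rfl
              exact ⟨Or.inl rfl, h1⟩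
          rw [heq1, Finset.card_singleton]
        · have hnc1 : c ∉ MECaux.pal G f w1 := fun h1 => hnb ⟨h1, h2⟩
          have heq1 : Wst.filter (fun z => c ∈ MECaux.pal G f z) = {w2} := by
            rw [hWpair]
            ext z
            simp only [Finset.mem_filter, Finset.mem_insert, Finset.mem_singleton]
            constructor
            · rintro ⟨rfl | rfl, hcz⟩
              · exact absurd hcz hnc1
              · rfl
            · rintro rfl
              exact ⟨Or.inr rfl, h2⟩
          rw [heq1, Finset.card_singleton]
      rw [hYfull, hWone] at hev
      rcases hbodd with ⟨k, hk⟩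
      rcases hev with ⟨m, hm'⟩
      exact Nat.odd_iff.mpr (by omega)
  -- final numeric contradiction
  have haneb : a ≠ b := by
    intro h
    rcases hOdd with ⟨k, hk⟩
    omega
  have hn2 : 81 ≤ n ^ 2 := by
    rw [sq]
    exact Nat.mul_le_mul hn hn
  have hmn : 4 * G.edgeFinset.card + 3 < n ^ 2 + 2 * n := by omega
  have hc1 : (2:ℤ) * (G.edgeFinset.card : ℤ)
      = (a:ℤ) * (X.card:ℤ) + (SX:ℤ) + ((b:ℤ) * (Y.card:ℤ) + (SY:ℤ))
        + ((G.degree w1 : ℤ) + (G.degree w2 : ℤ)) := by exact_mod_cast hE2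
  have hc2 : (2:ℤ) * (n:ℤ) ≤ (SX:ℤ) + (SY:ℤ) + ((G.degree w1 : ℤ) + (G.degree w2 : ℤ)) + 2 := by
    exact_mod_cast hkey
  have hc3 : (X.card : ℤ) = (a:ℤ) - 1 := by
    have : ((X.card : ℤ)) + 1 = (a:ℤ) := by exact_mod_cast hX1
    linarith
  have hc4 : (Y.card : ℤ) = (b:ℤ) - 1 := by
    have : ((Y.card : ℤ)) + 1 = (b:ℤ) := by exact_mod_cast hY1
    linarith
  have hc5 : (a:ℤ) + (b:ℤ) = (n:ℤ) := by exact_mod_cast hab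
  have hc6 : (4:ℤ) * (G.edgeFinset.card : ℤ) + 3 < (n:ℤ)^2 + 2 * (n:ℤ) := by exact_mod_cast hmn
  have hZab : (1:ℤ) ≤ ((a:ℤ) - (b:ℤ))^2 := by
    have hzne : (a:ℤ) - (b:ℤ) ≠ 0 := by
      intro h
      apply haneb
      have : (a:ℤ) = (b:ℤ) := by linarith
      exact_mod_cast this
    have habs := Int.one_le_abs hzne
    calc (1:ℤ) = 1 ^ 2 := (one_pow 2).symm
    _ ≤ |(a:ℤ) - (b:ℤ)| ^ 2 := pow_le_pow_left₀ (by norm_num) habs 2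
    _ = ((a:ℤ) - (b:ℤ))^2 := sq_abs _
  rw [hc3, hc4] at hc1
  have hring : 2*(a:ℤ)*((a:ℤ)-1) + 2*(b:ℤ)*((b:ℤ)-1) + 2*(n:ℤ) = (n:ℤ)^2 + ((a:ℤ)-(b:ℤ))^2 := by
    rw [← hc5]; ring
  have key2 : (n:ℤ)^2 + 1 ≤ 2*(a:ℤ)*((a:ℤ)-1) + 2*(b:ℤ)*((b:ℤ)-1) + 2*(n:ℤ) :=
    by linarith only [hring, hZab]
  have key1 : 2*(a:ℤ)*((a:ℤ)-1) + 2*(b:ℤ)*((b:ℤ)-1) + 4*(n:ℤ) - 4 ≤ 4 * (G.edgeFinset.card:ℤ) := by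
    linarith only [hc1, hc2]
  linarith only [key1, key2, hc6]
end

section
/- Let G be a graph of odd order n ≥ 9 having a maximal proper edge coloring with n colors and |E(G)| < n²/4 + n/2 − 3/4. Then any two non-adjacent vertices of G have at least 3 common neighbors. -/
set_option maxHeartbeats 1600000

namespace Stmt11Aux

open Finset

variable {V : Type*} [Fintype V] [DecidableEq V] (G : SimpleGraph V)
    [DecidableRel G.Adj] (f : Sym2 V → ℕ) (C : Finset ℕ)

/-- The finset of colors seen by a vertex. -/
def SF (z : V) : Finset ℕ := (G.neighborFinset z).image (fun w => f s(z, w))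

variable {G f C}

lemma mem_SF_iff {z : V} {c : ℕ} : c ∈ SF G f z ↔ Sees G f z c := by
  constructor
  · rintro hc
    rw [SF, Finset.mem_image] at hc
    obtain ⟨w, hw, rfl⟩ := hc
    rw [SimpleGraph.mem_neighborFinset] at hw
    exact ⟨s(z, w), hw, Sym2.mem_mk_left _ _, rfl⟩
  · rintro ⟨e, he, hze, rfl⟩
    rw [SF, Finset.mem_image]
    induction e with
    | h p q =>
      rcases Sym2.mem_iff.1 hze with rfl | rfl
      · exact ⟨q, by rwa [SimpleGraph.mem_neighborFinset], rfl⟩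
      · refine ⟨p, by rw [SimpleGraph.mem_neighborFinset]; exact (SimpleGraph.mem_edgeSet G).1 he |>.symm, ?_⟩
        rw [Sym2.eq_swap]

lemma injOn_nbr_color (hp : ProperEdgeColoring G f C) (z : V) :
    Set.InjOn (fun w => f s(z, w)) (G.neighborFinset z : Set V) := by
  intro w1 h1 w2 h2 heq
  by_contra hne
  rw [Finset.mem_coe, SimpleGraph.mem_neighborFinset] at h1 h2
  exact hp.2 s(z, w1) h1 s(z, w2) h2
    (fun h => hne (Sym2.congr_right.1 h))
    ⟨z, Sym2.mem_mk_left _ _, Sym2.mem_mk_left _ _⟩ heq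

lemma card_SF (hp : ProperEdgeColoring G f C) (z : V) :
    (SF G f z).card = G.degree z := by
  rw [SF, Finset.card_image_of_injOn (injOn_nbr_color hp z),
    SimpleGraph.card_neighborFinset_eq_degree]

lemma SF_subset_C (hp : ProperEdgeColoring G f C) (z : V) : SF G f z ⊆ C := by
  intro c hc
  rw [SF, Finset.mem_image] at hc
  obtain ⟨w, hw, rfl⟩ := hc
  rw [SimpleGraph.mem_neighborFinset] at hw
  exact hp.1 _ hw

lemma C_subset_union (hmax : MaximalEdgeColoring G f C) {p q : V}
    (hne : p ≠ q) (hnadj : ¬ G.Adj p q) : C ⊆ SF G f p ∪ SF G f q := by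
  intro c hc
  rcases hmax.2 p q hne hnadj c hc with h | h
  · exact Finset.mem_union_left _ (mem_SF_iff.2 h)
  · exact Finset.mem_union_right _ (mem_SF_iff.2 h)

/-- Double counting swap. -/
lemma sum_card_filter_comm (A B : Finset V) (R : V → V → Prop)
    [∀ x y, Decidable (R x y)] :
    ∑ x ∈ A, (B.filter (fun y => R x y)).card
      = ∑ y ∈ B, (A.filter (fun x => R x y)).card := by
  simp only [Finset.card_filter]
  exact Finset.sum_comm

/-- The set of vertices seeing a given color has even cardinality. -/
lemma even_card_seers (hp : ProperEdgeColoring G f C) (c : ℕ) :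
    Even ((Finset.univ.filter (fun z : V => c ∈ SF G f z)).card) := by
  classical
  have hset : (Finset.univ.filter (fun z : V => c ∈ SF G f z))
      = (G.edgeFinset.filter (fun e => f e = c)).biUnion
          (fun e => Finset.univ.filter (fun z : V => z ∈ e)) := by
    ext z
    simp only [Finset.mem_filter, Finset.mem_univ, true_and, Finset.mem_biUnion,
      SimpleGraph.mem_edgeFinset]
    rw [mem_SF_iff]
    constructor
    · rintro ⟨e, he, hze, hfe⟩; exact ⟨e, ⟨he, hfe⟩, hze⟩
    · rintro ⟨e, ⟨he, hfe⟩, hze⟩; exact ⟨e, he, hze, hfe⟩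
  rw [hset, Finset.card_biUnion]
  · have h2 : ∀ e ∈ G.edgeFinset.filter (fun e => f e = c),
        (Finset.univ.filter (fun z : V => z ∈ e)).card = 2 := by
      intro e he
      rw [Finset.mem_filter, SimpleGraph.mem_edgeFinset] at he
      obtain ⟨he, _⟩ := he
      induction e with
      | h p q =>
        have hpq : p ≠ q := (G.ne_of_adj ((SimpleGraph.mem_edgeSet G).1 he))
        have : (Finset.univ.filter (fun z : V => z ∈ s(p, q))) = {p, q} := by
          ext z
          simp [Sym2.mem_iff]
        rw [this, Finset.card_pair hpq]
    rw [Finset.sum_congr rfl h2]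
    exact ⟨(G.edgeFinset.filter (fun e => f e = c)).card, by rw [Finset.sum_const, smul_eq_mul, mul_comm, two_mul]⟩
  · intro e1 h1 e2 h2 hne
    rw [Finset.mem_coe, Finset.mem_filter, SimpleGraph.mem_edgeFinset] at h1 h2
    rw [Function.onFun, Finset.disjoint_left]
    intro z hz1 hz2
    rw [Finset.mem_filter] at hz1 hz2
    exact hp.2 e1 h1.1 e2 h2.1 hne ⟨z, hz1.2, hz2.2⟩ (h1.2.trans h2.2.symm)

/-- Double counting swap, heterogeneous version. -/
lemma sum_card_filter_comm' {α β : Type*} (A : Finset α) (B : Finset β)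
    (R : α → β → Prop) [∀ x y, Decidable (R x y)] :
    ∑ x ∈ A, (B.filter (fun y => R x y)).card
      = ∑ y ∈ B, (A.filter (fun x => R x y)).card := by
  simp only [Finset.card_filter]
  exact Finset.sum_comm

/-- The number of edges at `z` whose color lies in `D` equals `|S z ∩ D|`. -/
lemma card_colored_nbrs (hp : ProperEdgeColoring G f C) (z : V) (D : Finset ℕ) :
    ((G.neighborFinset z).filter (fun w => f s(z, w) ∈ D)).card
      = (SF G f z ∩ D).card := by
  have h1 : ((G.neighborFinset z).filter (fun w => f s(z, w) ∈ D)).image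
      (fun w => f s(z, w)) = SF G f z ∩ D := by
    ext c
    simp only [Finset.mem_image, Finset.mem_filter, Finset.mem_inter, SF]
    constructor
    · rintro ⟨w, ⟨hw, hD⟩, rfl⟩
      exact ⟨⟨w, hw, rfl⟩, hD⟩
    · rintro ⟨⟨w, hw, rfl⟩, hD⟩
      exact ⟨w, ⟨hw, hD⟩, rfl⟩
  rw [← h1, Finset.card_image_of_injOn
    ((injOn_nbr_color hp z).mono (by intro w hw; exact (Finset.mem_filter.1 hw).1))]

/-- Claim A: parity-based lower bound on the `X`-side extras. -/
lemma claimA (hmax : MaximalEdgeColoring G f C) {u v w1 w2 : V} {X Y W : Finset V}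
    (hW : W = {w1, w2}) (hw12 : w1 ≠ w2) (hnadjw : ¬ G.Adj w1 w2)
    (hpart : ∀ T : Finset V, T.card
      = (T ∩ X).card + (T ∩ Y).card + (T ∩ W).card + (T ∩ ({u, v} : Finset V)).card)
    (hSy : ∀ y ∈ Y, SF G f u ⊆ SF G f y)
    (hdisj : Disjoint (SF G f u) (SF G f v))
    (hadjw : ∀ w ∈ W, G.Adj u w ∧ G.Adj v w)
    (hOdda : Odd (G.degree u))
    (hYa : Y.card + 2 = G.degree u) :
    2 * G.degree u ≤ (∑ x ∈ X, (SF G f x ∩ SF G f u).card) + 2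
      + (∑ w ∈ W, (Y.filter (fun y => G.Adj w y)).card)
      + (∑ w ∈ W, (X.filter (fun x => G.Adj w x ∧ f s(w, x) ∈ SF G f u)).card) := by
  classical
  have hp := hmax.1
  have hw1W : w1 ∈ W := by rw [hW]; exact Finset.mem_insert_self _ _
  have hw2W : w2 ∈ W := by rw [hW]; exact Finset.mem_insert_of_mem (Finset.mem_singleton_self _)
  -- seer existence for colors in `S u` missed by one of the wᵢ
  have hseer : ∀ wa wb : V, W = {wa, wb} → wa ≠ wb → ¬ G.Adj wa wb →
      ∀ c ∈ SF G f u, c ∉ SF G f wa →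
        (X.filter (fun x => c ∈ SF G f x)).Nonempty := by
    intro wa wb hWab hab hnab c hcu hca
    have hcC : c ∈ C := SF_subset_C hp u hcu
    have hcb : c ∈ SF G f wb := by
      rcases hmax.2 wa wb hab hnab c hcC with h | h
      · exact absurd (mem_SF_iff.2 h) hca
      · exact mem_SF_iff.2 h
    set T := Finset.univ.filter (fun z : V => c ∈ SF G f z) with hT
    have heven : Even T.card := even_card_seers hp c
    have h1 : T ∩ Y = Y := by
      refine Finset.inter_eq_right.2 (fun y hy => ?_)
      exact Finset.mem_filter.2 ⟨Finset.mem_univ _, hSy y hy hcu⟩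
    have h2 : T ∩ W = {wb} := by
      rw [hWab]
      ext z
      simp only [Finset.mem_inter, Finset.mem_insert, Finset.mem_singleton, hT,
        Finset.mem_filter, Finset.mem_univ, true_and]
      constructor
      · rintro ⟨hz, rfl | rfl⟩
        · exact absurd hz hca
        · rfl
      · rintro rfl
        exact ⟨hcb, Or.inr rfl⟩
    have h3 : T ∩ ({u, v} : Finset V) = {u} := by
      ext z
      simp only [Finset.mem_inter, Finset.mem_insert, Finset.mem_singleton, hT,
        Finset.mem_filter, Finset.mem_univ, true_and]
      constructor
      · rintro ⟨hz, rfl | rfl⟩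
        · rfl
        · exact absurd hcu (Finset.disjoint_right.1 hdisj hz)
      · rintro rfl
        exact ⟨hcu, Or.inl rfl⟩
    have hcount := hpart T
    rw [h1, h2, h3, Finset.card_singleton, Finset.card_singleton] at hcount
    have hodd : Odd ((T ∩ X).card) := by
      rcases heven with ⟨k, hk⟩
      rcases hOdda with ⟨j, hj⟩
      exact ⟨((T ∩ X).card - 1) / 2, by omega⟩
    have hpos : 0 < (T ∩ X).card := by
      rcases hodd with ⟨l, hl⟩; omega
    obtain ⟨x, hx⟩ := Finset.card_pos.1 hpos
    rw [Finset.mem_inter, hT, Finset.mem_filter] at hx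
    exact ⟨x, Finset.mem_filter.2 ⟨hx.2, hx.1.2⟩⟩
  -- the missed-color sets
  have hDdisj : Disjoint (SF G f u \ SF G f w1) (SF G f u \ SF G f w2) := by
    rw [Finset.disjoint_left]
    intro c h1 h2
    have hcC : c ∈ C := SF_subset_C hp u (Finset.mem_sdiff.1 h1).1
    rcases hmax.2 w1 w2 hw12 hnadjw c hcC with h | h
    · exact (Finset.mem_sdiff.1 h1).2 (mem_SF_iff.2 h)
    · exact (Finset.mem_sdiff.1 h2).2 (mem_SF_iff.2 h)
  -- E_X is at least |D1| + |D2|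
  have hEX : (SF G f u \ SF G f w1).card + (SF G f u \ SF G f w2).card
      ≤ ∑ x ∈ X, (SF G f x ∩ SF G f u).card := by
    have hswap : ∑ x ∈ X, (SF G f x ∩ SF G f u).card
        = ∑ c ∈ SF G f u, (X.filter (fun x => c ∈ SF G f x)).card := by
      have hcg : ∀ x ∈ X, (SF G f x ∩ SF G f u).card
          = ((SF G f u).filter (fun c => c ∈ SF G f x)).card := by
        intro x _
        congr 1
        ext c
        simp only [Finset.mem_inter, Finset.mem_filter]
        exact and_comm
      rw [Finset.sum_congr rfl hcg, sum_card_filter_comm']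
    rw [hswap]
    have hsub : (SF G f u \ SF G f w1) ∪ (SF G f u \ SF G f w2) ⊆ SF G f u :=
      Finset.union_subset Finset.sdiff_subset Finset.sdiff_subset
    calc (SF G f u \ SF G f w1).card + (SF G f u \ SF G f w2).card
        = ((SF G f u \ SF G f w1) ∪ (SF G f u \ SF G f w2)).card :=
          (Finset.card_union_of_disjoint hDdisj).symm
      _ ≤ ∑ c ∈ (SF G f u \ SF G f w1) ∪ (SF G f u \ SF G f w2),
            (X.filter (fun x => c ∈ SF G f x)).card := by
          rw [Finset.card_eq_sum_ones]
          refine Finset.sum_le_sum (fun c hc => ?_)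
          rcases Finset.mem_union.1 hc with h | h
          · have := hseer w1 w2 hW hw12 hnadjw c (Finset.mem_sdiff.1 h).1
              (Finset.mem_sdiff.1 h).2
            exact Finset.card_pos.2 this
          · have := hseer w2 w1 (by rw [hW, Finset.pair_comm]) hw12.symm
              (fun hadj => hnadjw hadj.symm) c (Finset.mem_sdiff.1 h).1
              (Finset.mem_sdiff.1 h).2
            exact Finset.card_pos.2 this
      _ ≤ ∑ c ∈ SF G f u, (X.filter (fun x => c ∈ SF G f x)).card :=
          Finset.sum_le_sum_of_subset hsub
  -- per-w bound on colors of S u seen at w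
  have halpha : ∀ wa : V, wa ∈ W → ¬ G.Adj wa w1 → ¬ G.Adj wa w2 →
      G.degree u ≤ (SF G f u \ SF G f wa).card + 1
        + (Y.filter (fun y => G.Adj wa y)).card
        + (X.filter (fun x => G.Adj wa x ∧ f s(wa, x) ∈ SF G f u)).card := by
    intro wa hwaW hna1 hna2
    obtain ⟨hua, hva⟩ := hadjw wa hwaW
    have hcard : (SF G f u \ SF G f wa).card + (SF G f u ∩ SF G f wa).card
        = G.degree u := by
      rw [Finset.card_sdiff_add_card_inter, card_SF hp]
    have hA : (SF G f u ∩ SF G f wa).card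
        = ((G.neighborFinset wa).filter (fun z => f s(wa, z) ∈ SF G f u)).card := by
      rw [card_colored_nbrs hp, Finset.inter_comm]
    set A := (G.neighborFinset wa).filter (fun z => f s(wa, z) ∈ SF G f u) with hAdef
    have hsplit := hpart A
    have hax : A ∩ X ⊆ X.filter (fun x => G.Adj wa x ∧ f s(wa, x) ∈ SF G f u) := by
      intro z hz
      rw [Finset.mem_inter, hAdef, Finset.mem_filter, SimpleGraph.mem_neighborFinset] at hz
      exact Finset.mem_filter.2 ⟨hz.2, hz.1.1, hz.1.2⟩
    have hay : A ∩ Y ⊆ Y.filter (fun y => G.Adj wa y) := by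
      intro z hz
      rw [Finset.mem_inter, hAdef, Finset.mem_filter, SimpleGraph.mem_neighborFinset] at hz
      exact Finset.mem_filter.2 ⟨hz.2, hz.1.1⟩
    have haw : A ∩ W = ∅ := by
      rw [hW]
      ext z
      simp only [Finset.mem_inter, Finset.mem_insert, Finset.mem_singleton,
        Finset.notMem_empty, iff_false, not_and, hAdef, Finset.mem_filter,
        SimpleGraph.mem_neighborFinset]
      rintro ⟨hadj, _⟩ (rfl | rfl)
      · exact hna1 hadj
      · exact hna2 hadj
    have hauv : (A ∩ ({u, v} : Finset V)).card ≤ 1 := by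
      have hsub : A ∩ ({u, v} : Finset V) ⊆ {u} := by
        intro z hz
        rw [Finset.mem_inter] at hz
        rcases Finset.mem_insert.1 hz.2 with rfl | hzv
        · exact Finset.mem_singleton_self _
        · rw [Finset.mem_singleton] at hzv
          subst hzv
          exfalso
          rw [hAdef, Finset.mem_filter] at hz
          have hfv : f s(wa, z) ∈ SF G f z := by
            rw [SF, Finset.mem_image]
            exact ⟨wa, by rwa [SimpleGraph.mem_neighborFinset], by rw [Sym2.eq_swap]⟩
          exact Finset.disjoint_right.1 hdisj hfv hz.1.2
      calc (A ∩ ({u, v} : Finset V)).card ≤ ({u} : Finset V).card :=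
            Finset.card_le_card hsub
        _ = 1 := Finset.card_singleton _
    have hx' := Finset.card_le_card hax
    have hy' := Finset.card_le_card hay
    rw [haw, Finset.card_empty] at hsplit
    omega
  have hn1 : ¬ G.Adj w1 w1 := G.loopless.irrefl w1
  have hn2 : ¬ G.Adj w2 w2 := G.loopless.irrefl w2
  have h1 := halpha w1 hw1W hn1 hnadjw
  have h2 := halpha w2 hw2W (fun h => hnadjw h.symm) hn2
  rw [hW, Finset.sum_pair hw12, Finset.sum_pair hw12]
  omega

lemma sq_help (p q : ℕ) (h : p ≠ q) : 2 * (p * q) + 1 ≤ p * p + q * q := by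
  rcases Nat.lt_or_ge p q with h1 | h1
  · obtain ⟨d, rfl⟩ := Nat.exists_eq_add_of_lt h1
    nlinarith
  · have h2 : q < p := lt_of_le_of_ne h1 (Ne.symm h)
    obtain ⟨d, rfl⟩ := Nat.exists_eq_add_of_lt h2
    nlinarith

lemma final_help (p q M : ℕ) (h1 : p * p + q * q + 5 * p + 5 * q + 10 ≤ 2 * M)
    (h2 : 2 * (p * q) + 1 ≤ p * p + q * q) :
    (p + q + 4) ^ 2 + 2 * (p + q + 4) ≤ 4 * M + 3 := by nlinarith

end Stmt11Aux

open Finset Stmt11Aux in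
theorem stmt_11 {V : Type*} [Fintype V] [DecidableEq V] (G : SimpleGraph V)
    [DecidableRel G.Adj] (f : Sym2 V → ℕ) (C : Finset ℕ)
    (hOdd : Odd (Fintype.card V)) (hn : 9 ≤ Fintype.card V)
    (hC : C.card = Fintype.card V)
    (hmax : MaximalEdgeColoring G f C)
    (hm : 4 * G.edgeFinset.card < Fintype.card V ^ 2 + 2 * Fintype.card V - 3) :
    ∀ u v : V, u ≠ v → ¬ G.Adj u v →
      3 ≤ (Finset.univ.filter (fun w : V => G.Adj u w ∧ G.Adj v w)).card := by
  classical
  intro u v huv hnadj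
  by_contra hlt
  push_neg at hlt
  have hp := hmax.1
  set n := Fintype.card V with hn'
  set m := G.edgeFinset.card with hm'
  set Nu := G.neighborFinset u with hNu
  set Nv := G.neighborFinset v with hNv
  set a := G.degree u with ha
  set b := G.degree v with hb
  have hfilter : Finset.univ.filter (fun w : V => G.Adj u w ∧ G.Adj v w) = Nu ∩ Nv := by
    ext z
    simp [hNu, hNv, SimpleGraph.mem_neighborFinset]
  rw [hfilter] at hlt
  set W := Nu ∩ Nv with hWdef
  have hNucard : Nu.card = a := G.card_neighborFinset_eq_degree u
  have hNvcard : Nv.card = b := G.card_neighborFinset_eq_degree v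
  have hab_ge : n ≤ a + b := by
    have h1 : C.card ≤ (SF G f u ∪ SF G f v).card :=
      Finset.card_le_card (C_subset_union hmax huv hnadj)
    have h2 : (SF G f u ∪ SF G f v).card ≤ (SF G f u).card + (SF G f v).card :=
      Finset.card_union_le _ _
    rw [card_SF hp, card_SF hp] at h2
    rw [hC] at h1; omega
  have hsub : Nu ∪ Nv ⊆ Finset.univ \ ({u, v} : Finset V) := by
    intro z hz
    rw [Finset.mem_sdiff]
    refine ⟨Finset.mem_univ _, fun hzuv => ?_⟩
    rcases Finset.mem_insert.1 hzuv with rfl | hzv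
    · rcases Finset.mem_union.1 hz with h | h
      · exact G.loopless.irrefl z (by rwa [hNu, SimpleGraph.mem_neighborFinset] at h)
      · exact hnadj ((by rwa [hNv, SimpleGraph.mem_neighborFinset] at h : G.Adj v z)).symm
    · rw [Finset.mem_singleton] at hzv
      subst hzv
      rcases Finset.mem_union.1 hz with h | h
      · exact hnadj (by rwa [hNu, SimpleGraph.mem_neighborFinset] at h)
      · exact G.loopless.irrefl z (by rwa [hNv, SimpleGraph.mem_neighborFinset] at h)
  have hcompl : (Finset.univ \ ({u, v} : Finset V)).card = n - 2 := by
    rw [Finset.card_sdiff_of_subset (Finset.subset_univ _), Finset.card_univ, Finset.card_pair huv]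
  have hUW : (Nu ∪ Nv).card + W.card = a + b := by
    rw [Finset.card_union_add_card_inter, hNucard, hNvcard]
  have hUnle : (Nu ∪ Nv).card ≤ n - 2 := by
    rw [← hcompl]; exact Finset.card_le_card hsub
  have hn9 : 9 ≤ n := hn
  have hab : a + b = n := by omega
  have hW2 : W.card = 2 := by omega
  have hUnion_eq : Nu ∪ Nv = Finset.univ \ ({u, v} : Finset V) := by
    refine Finset.eq_of_subset_of_card_le hsub ?_
    rw [hcompl]; omega
  obtain ⟨w1, w2, hw12, hWpair⟩ := Finset.card_eq_two.1 hW2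
  -- color partition
  have hSC : SF G f u ∪ SF G f v = C :=
    Finset.Subset.antisymm
      (Finset.union_subset (SF_subset_C hp u) (SF_subset_C hp v))
      (C_subset_union hmax huv hnadj)
  have hdisjS : Disjoint (SF G f u) (SF G f v) := by
    have hciu := Finset.card_union_add_card_inter (SF G f u) (SF G f v)
    rw [hSC, hC, card_SF hp, card_SF hp] at hciu
    have h0 : (SF G f u ∩ SF G f v).card = 0 := by omega
    exact Finset.disjoint_iff_inter_eq_empty.2 (Finset.card_eq_zero.1 h0)
  set X := Nv \ Nu with hX
  set Y := Nu \ Nv with hY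
  have hXcard : X.card + 2 = b := by
    have h1 := Finset.card_sdiff_add_card_inter Nv Nu
    rw [hNvcard, Finset.inter_comm, ← hWdef, hW2, ← hX] at h1
    omega
  have hYcard : Y.card + 2 = a := by
    have h1 := Finset.card_sdiff_add_card_inter Nu Nv
    rw [hNucard, ← hWdef, hW2, ← hY] at h1
    omega
  -- membership facts
  have hXfacts : ∀ x ∈ X, G.Adj v x ∧ ¬ G.Adj u x ∧ x ≠ u ∧ x ≠ v := by
    intro x hx
    rw [hX, Finset.mem_sdiff, hNu, hNv, SimpleGraph.mem_neighborFinset,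
      SimpleGraph.mem_neighborFinset] at hx
    refine ⟨hx.1, hx.2, fun h => ?_, fun h => ?_⟩
    · subst h; exact hnadj hx.1.symm
    · subst h; exact G.loopless.irrefl _ hx.1
  have hYfacts : ∀ y ∈ Y, G.Adj u y ∧ ¬ G.Adj v y ∧ y ≠ u ∧ y ≠ v := by
    intro y hy
    rw [hY, Finset.mem_sdiff, hNu, hNv, SimpleGraph.mem_neighborFinset,
      SimpleGraph.mem_neighborFinset] at hy
    refine ⟨hy.1, hy.2, fun h => ?_, fun h => ?_⟩
    · subst h; exact G.loopless.irrefl _ hy.1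
    · subst h; exact hnadj hy.1
  have hWfacts : ∀ w ∈ W, G.Adj u w ∧ G.Adj v w := by
    intro w hw
    rw [hWdef, Finset.mem_inter, hNu, hNv, SimpleGraph.mem_neighborFinset,
      SimpleGraph.mem_neighborFinset] at hw
    exact hw
  -- disjointness of parts
  have hdXY : Disjoint X Y := by
    rw [Finset.disjoint_left]
    intro z hz1 hz2
    rw [hX, Finset.mem_sdiff] at hz1
    rw [hY, Finset.mem_sdiff] at hz2
    exact hz1.2 hz2.1
  have hdXW : Disjoint X W := by
    rw [Finset.disjoint_left]
    intro z hz1 hz2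
    rw [hX, Finset.mem_sdiff] at hz1
    rw [hWdef, Finset.mem_inter] at hz2
    exact hz1.2 hz2.1
  have hdYW : Disjoint Y W := by
    rw [Finset.disjoint_left]
    intro z hz1 hz2
    rw [hY, Finset.mem_sdiff] at hz1
    rw [hWdef, Finset.mem_inter] at hz2
    exact hz1.2 hz2.2
  have hdXuv : Disjoint X ({u, v} : Finset V) := by
    rw [Finset.disjoint_left]
    intro z hz1 hz2
    obtain ⟨_, _, hzu, hzv⟩ := hXfacts z hz1
    rcases Finset.mem_insert.1 hz2 with rfl | h
    · exact hzu rfl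
    · exact hzv (Finset.mem_singleton.1 h)
  have hdYuv : Disjoint Y ({u, v} : Finset V) := by
    rw [Finset.disjoint_left]
    intro z hz1 hz2
    obtain ⟨_, _, hzu, hzv⟩ := hYfacts z hz1
    rcases Finset.mem_insert.1 hz2 with rfl | h
    · exact hzu rfl
    · exact hzv (Finset.mem_singleton.1 h)
  have hdWuv : Disjoint W ({u, v} : Finset V) := by
    rw [Finset.disjoint_left]
    intro z hz1 hz2
    obtain ⟨h1, h2⟩ := hWfacts z hz1
    rcases Finset.mem_insert.1 hz2 with rfl | h
    · exact G.loopless.irrefl _ h1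
    · rw [Finset.mem_singleton] at h; subst h; exact G.loopless.irrefl _ h2
  -- coverage
  have hcover : ∀ z : V, z ∈ X ∨ z ∈ Y ∨ z ∈ W ∨ z ∈ ({u, v} : Finset V) := by
    intro z
    by_cases hzu : z = u
    · exact Or.inr (Or.inr (Or.inr (by simp [hzu])))
    by_cases hzv : z = v
    · exact Or.inr (Or.inr (Or.inr (by simp [hzv])))
    have hzm : z ∈ Nu ∪ Nv := by
      rw [hUnion_eq, Finset.mem_sdiff]
      exact ⟨Finset.mem_univ _, by simp [hzu, hzv]⟩
    by_cases h1 : z ∈ Nu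
    · by_cases h2 : z ∈ Nv
      · exact Or.inr (Or.inr (Or.inl (by rw [hWdef]; exact Finset.mem_inter.2 ⟨h1, h2⟩)))
      · exact Or.inr (Or.inl (by rw [hY]; exact Finset.mem_sdiff.2 ⟨h1, h2⟩))
    · have h2 : z ∈ Nv := by
        rcases Finset.mem_union.1 hzm with h | h
        · exact absurd h h1
        · exact h
      exact Or.inl (by rw [hX]; exact Finset.mem_sdiff.2 ⟨h2, h1⟩)
  -- the partition counting lemma
  have hpart : ∀ T : Finset V, T.card
      = (T ∩ X).card + (T ∩ Y).card + (T ∩ W).card + (T ∩ ({u, v} : Finset V)).card := by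
    intro T
    have hTeq : T = (T ∩ X) ∪ ((T ∩ Y) ∪ ((T ∩ W) ∪ (T ∩ ({u, v} : Finset V)))) := by
      ext z
      simp only [Finset.mem_union, Finset.mem_inter]
      constructor
      · intro hz
        rcases hcover z with h | h | h | h
        · exact Or.inl ⟨hz, h⟩
        · exact Or.inr (Or.inl ⟨hz, h⟩)
        · exact Or.inr (Or.inr (Or.inl ⟨hz, h⟩))
        · exact Or.inr (Or.inr (Or.inr ⟨hz, h⟩))
      · rintro (h | h | h | h) <;> exact h.1
    have hd1 : Disjoint (T ∩ W) (T ∩ ({u, v} : Finset V)) :=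
      Finset.disjoint_of_subset_left Finset.inter_subset_right
        (Finset.disjoint_of_subset_right Finset.inter_subset_right hdWuv)
    have hd2 : Disjoint (T ∩ Y) ((T ∩ W) ∪ (T ∩ ({u, v} : Finset V))) := by
      refine Finset.disjoint_union_right.2 ⟨?_, ?_⟩
      · exact Finset.disjoint_of_subset_left Finset.inter_subset_right
          (Finset.disjoint_of_subset_right Finset.inter_subset_right hdYW)
      · exact Finset.disjoint_of_subset_left Finset.inter_subset_right
          (Finset.disjoint_of_subset_right Finset.inter_subset_right hdYuv)
    have hd3 : Disjoint (T ∩ X) ((T ∩ Y) ∪ ((T ∩ W) ∪ (T ∩ ({u, v} : Finset V)))) := by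
      refine Finset.disjoint_union_right.2 ⟨?_, Finset.disjoint_union_right.2 ⟨?_, ?_⟩⟩
      · exact Finset.disjoint_of_subset_left Finset.inter_subset_right
          (Finset.disjoint_of_subset_right Finset.inter_subset_right hdXY)
      · exact Finset.disjoint_of_subset_left Finset.inter_subset_right
          (Finset.disjoint_of_subset_right Finset.inter_subset_right hdXW)
      · exact Finset.disjoint_of_subset_left Finset.inter_subset_right
          (Finset.disjoint_of_subset_right Finset.inter_subset_right hdXuv)
    calc T.card = ((T ∩ X) ∪ ((T ∩ Y) ∪ ((T ∩ W) ∪ (T ∩ ({u, v} : Finset V))))).card := by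
          rw [← hTeq]
      _ = (T ∩ X).card + ((T ∩ Y) ∪ ((T ∩ W) ∪ (T ∩ ({u, v} : Finset V)))).card :=
          Finset.card_union_of_disjoint hd3
      _ = (T ∩ X).card + ((T ∩ Y).card + ((T ∩ W) ∪ (T ∩ ({u, v} : Finset V))).card) := by
          rw [Finset.card_union_of_disjoint hd2]
      _ = (T ∩ X).card + ((T ∩ Y).card + ((T ∩ W).card + (T ∩ ({u, v} : Finset V)).card)) := by
          rw [Finset.card_union_of_disjoint hd1]
      _ = _ := by ring
  -- S-subset facts on X and Y
  have hSvX : ∀ x ∈ X, SF G f v ⊆ SF G f x := by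
    intro x hx c hc
    obtain ⟨hvx, hux, hxu, hxv⟩ := hXfacts x hx
    have hcC : c ∈ C := SF_subset_C hp v hc
    rcases Finset.mem_union.1 (C_subset_union hmax (Ne.symm hxu) hux hcC) with h | h
    · exact absurd h (Finset.disjoint_right.1 hdisjS hc)
    · exact h
  have hSuY : ∀ y ∈ Y, SF G f u ⊆ SF G f y := by
    intro y hy c hc
    obtain ⟨huy, hvy, hyu, hyv⟩ := hYfacts y hy
    have hcC : c ∈ C := SF_subset_C hp u hc
    rcases Finset.mem_union.1 (C_subset_union hmax (Ne.symm hyv) hvy hcC) with h | h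
    · exact absurd h (Finset.disjoint_left.1 hdisjS hc)
    · exact h
  -- degrees within X and Y
  have hdegX : ∀ x ∈ X, G.degree x = b + (SF G f x ∩ SF G f u).card := by
    intro x hx
    have h1 : (SF G f x).card = G.degree x := card_SF hp x
    have hxsplit : SF G f x = (SF G f x ∩ SF G f v) ∪ (SF G f x ∩ SF G f u) := by
      ext c
      simp only [Finset.mem_union, Finset.mem_inter]
      constructor
      · intro hc
        have hcC : c ∈ C := SF_subset_C hp x hc
        rw [← hSC] at hcC
        rcases Finset.mem_union.1 hcC with h | h
        · exact Or.inr ⟨hc, h⟩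
        · exact Or.inl ⟨hc, h⟩
      · rintro (h | h) <;> exact h.1
    have hdisj2 : Disjoint (SF G f x ∩ SF G f v) (SF G f x ∩ SF G f u) :=
      Finset.disjoint_of_subset_left Finset.inter_subset_right
        (Finset.disjoint_of_subset_right Finset.inter_subset_right hdisjS.symm)
    have hSvint : SF G f x ∩ SF G f v = SF G f v := Finset.inter_eq_right.2 (hSvX x hx)
    have h2 : G.degree x = (SF G f v).card + (SF G f x ∩ SF G f u).card := by
      conv_lhs => rw [← h1, hxsplit]
      rw [Finset.card_union_of_disjoint hdisj2, hSvint]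
    rw [card_SF hp] at h2
    exact h2
  have hdegY : ∀ y ∈ Y, G.degree y = a + (SF G f y ∩ SF G f v).card := by
    intro y hy
    have h1 : (SF G f y).card = G.degree y := card_SF hp y
    have hysplit : SF G f y = (SF G f y ∩ SF G f u) ∪ (SF G f y ∩ SF G f v) := by
      ext c
      simp only [Finset.mem_union, Finset.mem_inter]
      constructor
      · intro hc
        have hcC : c ∈ C := SF_subset_C hp y hc
        rw [← hSC] at hcC
        rcases Finset.mem_union.1 hcC with h | h
        · exact Or.inl ⟨hc, h⟩
        · exact Or.inr ⟨hc, h⟩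
      · rintro (h | h) <;> exact h.1
    have hdisj2 : Disjoint (SF G f y ∩ SF G f u) (SF G f y ∩ SF G f v) :=
      Finset.disjoint_of_subset_left Finset.inter_subset_right
        (Finset.disjoint_of_subset_right Finset.inter_subset_right hdisjS)
    have hSuint : SF G f y ∩ SF G f u = SF G f u := Finset.inter_eq_right.2 (hSuY y hy)
    have h2 : G.degree y = (SF G f u).card + (SF G f y ∩ SF G f v).card := by
      conv_lhs => rw [← h1, hysplit]
      rw [Finset.card_union_of_disjoint hdisj2, hSuint]
    rw [card_SF hp] at h2
    exact h2
  -- degree decomposition along the partition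
  have hdeg_split : ∀ z : V, G.degree z
      = (X.filter (fun y => G.Adj z y)).card + (Y.filter (fun y => G.Adj z y)).card
        + (W.filter (fun y => G.Adj z y)).card
        + (({u, v} : Finset V).filter (fun y => G.Adj z y)).card := by
    intro z
    have hNP : ∀ P : Finset V, G.neighborFinset z ∩ P = P.filter (fun y => G.Adj z y) := by
      intro P
      ext y
      simp [SimpleGraph.mem_neighborFinset, and_comm]
    have h1 := hpart (G.neighborFinset z)
    rw [hNP X, hNP Y, hNP W, hNP ({u, v} : Finset V)] at h1
    rw [← G.card_neighborFinset_eq_degree z, h1]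
  -- the summed quantities
  set EX := ∑ x ∈ X, (SF G f x ∩ SF G f u).card with hEXdef
  set EY := ∑ y ∈ Y, (SF G f y ∩ SF G f v).card with hEYdef
  set cXY := ∑ x ∈ X, (Y.filter (fun y => G.Adj x y)).card with hcXYdef
  set cXW := ∑ x ∈ X, (W.filter (fun w => G.Adj x w)).card with hcXWdef
  set cYW := ∑ y ∈ Y, (W.filter (fun w => G.Adj y w)).card with hcYWdef
  set tt := ∑ w ∈ W, (W.filter (fun w' => G.Adj w w')).card with httdef
  set Gq := ∑ x ∈ X, (W.filter (fun w => G.Adj x w ∧ f s(x, w) ∈ SF G f u)).card with hGqdef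
  set Hq := ∑ y ∈ Y, (W.filter (fun w => G.Adj y w ∧ f s(y, w) ∈ SF G f v)).card with hHqdef
  -- ledger inequality I1
  have hledgeX : ∀ x ∈ X, (SF G f x ∩ SF G f u).card + 2
      ≤ (Y.filter (fun y => G.Adj x y)).card + (W.filter (fun w => G.Adj x w)).card := by
    intro x hx
    obtain ⟨hvx, hux, hxu, hxv⟩ := hXfacts x hx
    have hsplit := hdeg_split x
    have hxdeg := hdegX x hx
    have hXpos : 1 ≤ X.card := Finset.card_pos.2 ⟨x, hx⟩
    have hcX_le : (X.filter (fun y => G.Adj x y)).card ≤ X.card - 1 := by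
      have hsub2 : X.filter (fun y => G.Adj x y) ⊆ X.erase x := by
        intro y hy
        rw [Finset.mem_filter] at hy
        exact Finset.mem_erase.2 ⟨fun h => G.loopless.irrefl x (h ▸ hy.2), hy.1⟩
      calc (X.filter (fun y => G.Adj x y)).card ≤ (X.erase x).card :=
            Finset.card_le_card hsub2
        _ = X.card - 1 := Finset.card_erase_of_mem hx
    have hcuv_le : (({u, v} : Finset V).filter (fun y => G.Adj x y)).card ≤ 1 := by
      have hsub2 : ({u, v} : Finset V).filter (fun y => G.Adj x y) ⊆ {v} := by
        intro z hz
        rw [Finset.mem_filter] at hz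
        rcases Finset.mem_insert.1 hz.1 with rfl | h
        · exact absurd hz.2.symm hux
        · exact h
      calc _ ≤ ({v} : Finset V).card := Finset.card_le_card hsub2
        _ = 1 := Finset.card_singleton _
    omega
  have I1 : EX + 2 * X.card ≤ cXY + cXW := by
    have h1 : ∑ x ∈ X, ((SF G f x ∩ SF G f u).card + 2)
        ≤ ∑ x ∈ X, ((Y.filter (fun y => G.Adj x y)).card
            + (W.filter (fun w => G.Adj x w)).card) :=
      Finset.sum_le_sum hledgeX
    rw [Finset.sum_add_distrib, Finset.sum_const, Finset.sum_add_distrib] at h1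
    simpa [hEXdef, hcXYdef, hcXWdef, mul_comm] using h1
  -- ledger inequality I2
  have hledgeY : ∀ y ∈ Y, (SF G f y ∩ SF G f v).card + 2
      ≤ (X.filter (fun x => G.Adj y x)).card + (W.filter (fun w => G.Adj y w)).card := by
    intro y hy
    obtain ⟨huy, hvy, hyu, hyv⟩ := hYfacts y hy
    have hsplit := hdeg_split y
    have hydeg := hdegY y hy
    have hYpos : 1 ≤ Y.card := Finset.card_pos.2 ⟨y, hy⟩
    have hcY_le : (Y.filter (fun z => G.Adj y z)).card ≤ Y.card - 1 := by
      have hsub2 : Y.filter (fun z => G.Adj y z) ⊆ Y.erase y := by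
        intro z hz
        rw [Finset.mem_filter] at hz
        exact Finset.mem_erase.2 ⟨fun h => G.loopless.irrefl y (h ▸ hz.2), hz.1⟩
      calc (Y.filter (fun z => G.Adj y z)).card ≤ (Y.erase y).card :=
            Finset.card_le_card hsub2
        _ = Y.card - 1 := Finset.card_erase_of_mem hy
    have hcuv_le : (({u, v} : Finset V).filter (fun z => G.Adj y z)).card ≤ 1 := by
      have hsub2 : ({u, v} : Finset V).filter (fun z => G.Adj y z) ⊆ {u} := by
        intro z hz
        rw [Finset.mem_filter] at hz
        rcases Finset.mem_insert.1 hz.1 with rfl | h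
        · exact Finset.mem_singleton_self _
        · rw [Finset.mem_singleton] at h
          subst h
          exact absurd hz.2.symm hvy
      calc _ ≤ ({u} : Finset V).card := Finset.card_le_card hsub2
        _ = 1 := Finset.card_singleton _
    omega
  have hswapXY : cXY = ∑ y ∈ Y, (X.filter (fun x => G.Adj y x)).card := by
    rw [hcXYdef, sum_card_filter_comm' X Y (fun x y => G.Adj x y)]
    refine Finset.sum_congr rfl (fun y _ => ?_)
    congr 1
    apply Finset.filter_congr
    intro x _
    simp [G.adj_comm]
  have I2 : EY + 2 * Y.card ≤ cXY + cYW := by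
    have h1 : ∑ y ∈ Y, ((SF G f y ∩ SF G f v).card + 2)
        ≤ ∑ y ∈ Y, ((X.filter (fun x => G.Adj y x)).card
            + (W.filter (fun w => G.Adj y w)).card) :=
      Finset.sum_le_sum hledgeY
    rw [Finset.sum_add_distrib, Finset.sum_const, Finset.sum_add_distrib, ← hswapXY] at h1
    simpa [hEYdef, hcYWdef, mul_comm] using h1
  -- color-split inequality I3
  have hcolorX : ∀ x ∈ X,
      (Y.filter (fun y => G.Adj x y ∧ f s(x, y) ∈ SF G f u)).card
        + (W.filter (fun w => G.Adj x w ∧ f s(x, w) ∈ SF G f u)).card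
      ≤ (SF G f x ∩ SF G f u).card := by
    intro x _
    rw [← card_colored_nbrs hp x (SF G f u)]
    have h1 : Y.filter (fun y => G.Adj x y ∧ f s(x, y) ∈ SF G f u)
        ⊆ (G.neighborFinset x).filter (fun w => f s(x, w) ∈ SF G f u) := by
      intro y hy
      rw [Finset.mem_filter] at hy
      exact Finset.mem_filter.2 ⟨(SimpleGraph.mem_neighborFinset _ _ _).2 hy.2.1, hy.2.2⟩
    have h2 : W.filter (fun w => G.Adj x w ∧ f s(x, w) ∈ SF G f u)
        ⊆ (G.neighborFinset x).filter (fun w => f s(x, w) ∈ SF G f u) := by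
      intro w hw
      rw [Finset.mem_filter] at hw
      exact Finset.mem_filter.2 ⟨(SimpleGraph.mem_neighborFinset _ _ _).2 hw.2.1, hw.2.2⟩
    have hd : Disjoint (Y.filter (fun y => G.Adj x y ∧ f s(x, y) ∈ SF G f u))
        (W.filter (fun w => G.Adj x w ∧ f s(x, w) ∈ SF G f u)) :=
      Finset.disjoint_of_subset_left (Finset.filter_subset _ _)
        (Finset.disjoint_of_subset_right (Finset.filter_subset _ _) hdYW)
    calc (Y.filter (fun y => G.Adj x y ∧ f s(x, y) ∈ SF G f u)).card
          + (W.filter (fun w => G.Adj x w ∧ f s(x, w) ∈ SF G f u)).card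
        = ((Y.filter (fun y => G.Adj x y ∧ f s(x, y) ∈ SF G f u))
            ∪ (W.filter (fun w => G.Adj x w ∧ f s(x, w) ∈ SF G f u))).card :=
          (Finset.card_union_of_disjoint hd).symm
      _ ≤ _ := Finset.card_le_card (Finset.union_subset h1 h2)
  have hcolorY : ∀ y ∈ Y,
      (X.filter (fun x => G.Adj y x ∧ f s(y, x) ∈ SF G f v)).card
        + (W.filter (fun w => G.Adj y w ∧ f s(y, w) ∈ SF G f v)).card
      ≤ (SF G f y ∩ SF G f v).card := by
    intro y _
    rw [← card_colored_nbrs hp y (SF G f v)]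
    have h1 : X.filter (fun x => G.Adj y x ∧ f s(y, x) ∈ SF G f v)
        ⊆ (G.neighborFinset y).filter (fun w => f s(y, w) ∈ SF G f v) := by
      intro x hx
      rw [Finset.mem_filter] at hx
      exact Finset.mem_filter.2 ⟨(SimpleGraph.mem_neighborFinset _ _ _).2 hx.2.1, hx.2.2⟩
    have h2 : W.filter (fun w => G.Adj y w ∧ f s(y, w) ∈ SF G f v)
        ⊆ (G.neighborFinset y).filter (fun w => f s(y, w) ∈ SF G f v) := by
      intro w hw
      rw [Finset.mem_filter] at hw
      exact Finset.mem_filter.2 ⟨(SimpleGraph.mem_neighborFinset _ _ _).2 hw.2.1, hw.2.2⟩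
    have hd : Disjoint (X.filter (fun x => G.Adj y x ∧ f s(y, x) ∈ SF G f v))
        (W.filter (fun w => G.Adj y w ∧ f s(y, w) ∈ SF G f v)) :=
      Finset.disjoint_of_subset_left (Finset.filter_subset _ _)
        (Finset.disjoint_of_subset_right (Finset.filter_subset _ _) hdXW)
    calc (X.filter (fun x => G.Adj y x ∧ f s(y, x) ∈ SF G f v)).card
          + (W.filter (fun w => G.Adj y w ∧ f s(y, w) ∈ SF G f v)).card
        = ((X.filter (fun x => G.Adj y x ∧ f s(y, x) ∈ SF G f v))
            ∪ (W.filter (fun w => G.Adj y w ∧ f s(y, w) ∈ SF G f v))).card :=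
          (Finset.card_union_of_disjoint hd).symm
      _ ≤ _ := Finset.card_le_card (Finset.union_subset h1 h2)
  have hcXYsplit : cXY ≤ (∑ x ∈ X, (Y.filter (fun y => G.Adj x y ∧ f s(x, y) ∈ SF G f u)).card)
      + (∑ x ∈ X, (Y.filter (fun y => G.Adj x y ∧ f s(x, y) ∈ SF G f v)).card) := by
    rw [hcXYdef, ← Finset.sum_add_distrib]
    refine Finset.sum_le_sum (fun x _ => ?_)
    have hsub2 : Y.filter (fun y => G.Adj x y)
        ⊆ (Y.filter (fun y => G.Adj x y ∧ f s(x, y) ∈ SF G f u))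
          ∪ (Y.filter (fun y => G.Adj x y ∧ f s(x, y) ∈ SF G f v)) := by
      intro y hy
      rw [Finset.mem_filter] at hy
      have hfC : f s(x, y) ∈ C := hp.1 _ ((SimpleGraph.mem_edgeSet G).2 hy.2)
      rw [← hSC] at hfC
      rcases Finset.mem_union.1 hfC with h | h
      · exact Finset.mem_union_left _ (Finset.mem_filter.2 ⟨hy.1, hy.2, h⟩)
      · exact Finset.mem_union_right _ (Finset.mem_filter.2 ⟨hy.1, hy.2, h⟩)
    exact (Finset.card_le_card hsub2).trans (Finset.card_union_le _ _)
  have hswapCol : ∑ x ∈ X, (Y.filter (fun y => G.Adj x y ∧ f s(x, y) ∈ SF G f v)).card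
      = ∑ y ∈ Y, (X.filter (fun x => G.Adj y x ∧ f s(y, x) ∈ SF G f v)).card := by
    rw [sum_card_filter_comm' X Y (fun x y => G.Adj x y ∧ f s(x, y) ∈ SF G f v)]
    refine Finset.sum_congr rfl (fun y _ => ?_)
    congr 1
    apply Finset.filter_congr
    intro x _
    rw [G.adj_comm, Sym2.eq_swap]
  have I3 : cXY + Gq + Hq ≤ EX + EY := by
    have h1 : (∑ x ∈ X, (Y.filter (fun y => G.Adj x y ∧ f s(x, y) ∈ SF G f u)).card) + Gq
        ≤ EX := by
      rw [hGqdef, hEXdef, ← Finset.sum_add_distrib]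
      exact Finset.sum_le_sum hcolorX
    have h2 : (∑ y ∈ Y, (X.filter (fun x => G.Adj y x ∧ f s(y, x) ∈ SF G f v)).card) + Hq
        ≤ EY := by
      rw [hHqdef, hEYdef, ← Finset.sum_add_distrib]
      exact Finset.sum_le_sum hcolorY
    rw [hswapCol] at hcXYsplit
    omega
  -- W side sums
  have hWX : ∑ w ∈ W, (X.filter (fun x => G.Adj w x)).card = cXW := by
    rw [hcXWdef, sum_card_filter_comm' X W (fun x w => G.Adj x w)]
    refine Finset.sum_congr rfl (fun w _ => ?_)
    congr 1
    apply Finset.filter_congr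
    intro x _
    simp [G.adj_comm]
  have hWY : ∑ w ∈ W, (Y.filter (fun y => G.Adj w y)).card = cYW := by
    rw [hcYWdef, sum_card_filter_comm' Y W (fun y w => G.Adj y w)]
    refine Finset.sum_congr rfl (fun w _ => ?_)
    congr 1
    apply Finset.filter_congr
    intro y _
    simp [G.adj_comm]
  have hWdegsum : ∑ w ∈ W, G.degree w = cXW + cYW + tt + 4 := by
    have h1 : ∀ w ∈ W, G.degree w
        = (X.filter (fun x => G.Adj w x)).card + (Y.filter (fun y => G.Adj w y)).card
          + (W.filter (fun w' => G.Adj w w')).card + 2 := by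
      intro w hw
      have h2 := hdeg_split w
      have h3 : ({u, v} : Finset V).filter (fun z => G.Adj w z) = ({u, v} : Finset V) := by
        refine Finset.filter_true_of_mem (fun z hz => ?_)
        rcases Finset.mem_insert.1 hz with rfl | hz'
        · exact (hWfacts w hw).1.symm
        · rw [Finset.mem_singleton] at hz'
          subst hz'
          exact (hWfacts w hw).2.symm
      rw [h3, Finset.card_pair huv] at h2
      exact h2
    rw [Finset.sum_congr rfl h1, Finset.sum_add_distrib, Finset.sum_add_distrib,
      Finset.sum_add_distrib, Finset.sum_const, hW2, hWX, hWY, ← httdef]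
    simp
  -- total degree sum
  have hXdegsum : ∑ x ∈ X, G.degree x = X.card * b + EX := by
    rw [Finset.sum_congr rfl hdegX, Finset.sum_add_distrib, Finset.sum_const, hEXdef,
      smul_eq_mul]
  have hYdegsum : ∑ y ∈ Y, G.degree y = Y.card * a + EY := by
    rw [Finset.sum_congr rfl hdegY, Finset.sum_add_distrib, Finset.sum_const, hEYdef,
      smul_eq_mul]
  have hsum : 2 * m = (a + b) + (X.card * b + EX) + (Y.card * a + EY)
      + (cXW + cYW + tt + 4) := by
    have h0 : ∑ z : V, G.degree z = 2 * m := G.sum_degrees_eq_twice_card_edges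
    have hd2 : Disjoint W ({u, v} : Finset V) := hdWuv
    have hd1 : Disjoint Y (W ∪ ({u, v} : Finset V)) :=
      Finset.disjoint_union_right.2 ⟨hdYW, hdYuv⟩
    have hd0 : Disjoint X (Y ∪ (W ∪ ({u, v} : Finset V))) :=
      Finset.disjoint_union_right.2 ⟨hdXY, Finset.disjoint_union_right.2 ⟨hdXW, hdXuv⟩⟩
    have hunivsplit : (Finset.univ : Finset V) = X ∪ (Y ∪ (W ∪ ({u, v} : Finset V))) := by
      ext z
      simp only [Finset.mem_univ, true_iff, Finset.mem_union]
      rcases hcover z with h | h | h | h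
      · exact Or.inl h
      · exact Or.inr (Or.inl h)
      · exact Or.inr (Or.inr (Or.inl h))
      · exact Or.inr (Or.inr (Or.inr h))
    rw [hunivsplit, Finset.sum_union hd0, Finset.sum_union hd1, Finset.sum_union hd2,
      Finset.sum_pair huv] at h0
    rw [← h0, hXdegsum, hYdegsum, hWdegsum]
    ring
  -- w1 w2 in W
  have hw1W : w1 ∈ W := by rw [hWpair]; exact Finset.mem_insert_self _ _
  have hw2W : w2 ∈ W := by rw [hWpair]; exact Finset.mem_insert_of_mem (Finset.mem_singleton_self _)
  -- swap form of Gq and Hq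
  have hGswap : ∑ w ∈ W, (X.filter (fun x => G.Adj w x ∧ f s(w, x) ∈ SF G f u)).card = Gq := by
    rw [hGqdef, sum_card_filter_comm' X W (fun x w => G.Adj x w ∧ f s(x, w) ∈ SF G f u)]
    refine Finset.sum_congr rfl (fun w _ => ?_)
    congr 1
    apply Finset.filter_congr
    intro x _
    rw [G.adj_comm, Sym2.eq_swap]
  have hHswap : ∑ w ∈ W, (Y.filter (fun y => G.Adj w y ∧ f s(w, y) ∈ SF G f v)).card = Hq := by
    rw [hHqdef, sum_card_filter_comm' Y W (fun y w => G.Adj y w ∧ f s(y, w) ∈ SF G f v)]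
    refine Finset.sum_congr rfl (fun w _ => ?_)
    congr 1
    apply Finset.filter_congr
    intro y _
    rw [G.adj_comm, Sym2.eq_swap]
  -- the key inequality
  have hkey : 2 * X.card + 2 * Y.card + 2 ≤ EX + EY + cXW + cYW + tt := by
    by_cases hadj12 : G.Adj w1 w2
    · -- tt = 2
      have htt2 : tt = 2 := by
        rw [httdef, hWpair, Finset.sum_pair hw12]
        have hf1 : ({w1, w2} : Finset V).filter (fun z => G.Adj w1 z) = {w2} := by
          ext z
          simp only [Finset.mem_filter, Finset.mem_insert, Finset.mem_singleton]
          constructor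
          · rintro ⟨rfl | rfl, hadj⟩
            · exact absurd hadj (G.loopless.irrefl _)
            · rfl
          · rintro rfl
            exact ⟨Or.inr rfl, hadj12⟩
        have hf2 : ({w1, w2} : Finset V).filter (fun z => G.Adj w2 z) = {w1} := by
          ext z
          simp only [Finset.mem_filter, Finset.mem_insert, Finset.mem_singleton]
          constructor
          · rintro ⟨rfl | rfl, hadj⟩
            · rfl
            · exact absurd hadj (G.loopless.irrefl _)
          · rintro rfl
            exact ⟨Or.inl rfl, hadj12.symm⟩
        rw [hf1, hf2, Finset.card_singleton, Finset.card_singleton]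
      omega
    · -- tt = 0
      have htt0 : tt = 0 := by
        rw [httdef, hWpair, Finset.sum_pair hw12]
        have hf1 : ({w1, w2} : Finset V).filter (fun z => G.Adj w1 z) = ∅ := by
          ext z
          simp only [Finset.mem_filter, Finset.mem_insert, Finset.mem_singleton,
            Finset.notMem_empty, iff_false, not_and]
          rintro (rfl | rfl)
          · exact G.loopless.irrefl _
          · exact hadj12
        have hf2 : ({w1, w2} : Finset V).filter (fun z => G.Adj w2 z) = ∅ := by
          ext z
          simp only [Finset.mem_filter, Finset.mem_insert, Finset.mem_singleton,
            Finset.notMem_empty, iff_false, not_and]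
          rintro (rfl | rfl)
          · exact fun h => hadj12 h.symm
          · exact G.loopless.irrefl _
        rw [hf1, hf2, Finset.card_empty]
      have hOddab : Odd a ∨ Odd b := by
        rw [Nat.odd_iff] at hOdd ⊢
        rw [Nat.odd_iff]
        omega
      rcases hOddab with hOdda | hOddb
      · have I4 := claimA hmax hWpair hw12 hadj12 hpart hSuY hdisjS hWfacts hOdda hYcard
        rw [hWY, hGswap, ← hEXdef, ← ha] at I4
        omega
      · have hadjw' : ∀ w ∈ W, G.Adj v w ∧ G.Adj u w :=
          fun w hw => ⟨(hWfacts w hw).2, (hWfacts w hw).1⟩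
        have hpart' : ∀ T : Finset V, T.card
            = (T ∩ Y).card + (T ∩ X).card + (T ∩ W).card
              + (T ∩ ({v, u} : Finset V)).card := by
          intro T
          have h1 := hpart T
          rw [Finset.pair_comm v u]
          omega
        have I4 := claimA hmax hWpair hw12 hadj12 hpart' hSvX hdisjS.symm hadjw'
          hOddb hXcard
        rw [hWX, hHswap, ← hEYdef, ← hb] at I4
        omega
  -- final arithmetic
  have hbp : b = X.card + 2 := by omega
  have haq : a = Y.card + 2 := by omega
  have hnval : n = X.card + Y.card + 4 := by omega
  have hne : X.card ≠ Y.card := by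
    rw [Nat.odd_iff] at hOdd
    omega
  have hfin : X.card * X.card + Y.card * Y.card + 5 * X.card + 5 * Y.card + 10
      ≤ 2 * m := by
    have h1 : X.card * b = X.card * X.card + 2 * X.card := by rw [hbp]; ring
    have h2 : Y.card * a = Y.card * Y.card + 2 * Y.card := by rw [haq]; ring
    generalize hR : X.card * b = R at hsum h1
    generalize hS : Y.card * a = S at hsum h2
    generalize hP : X.card * X.card = P at h1 ⊢
    generalize hQ : Y.card * Y.card = Q at h2 ⊢
    omega
  have hppqq : 2 * (X.card * Y.card) + 1 ≤ X.card * X.card + Y.card * Y.card :=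
    sq_help _ _ hne
  have hlast : n ^ 2 + 2 * n ≤ 4 * m + 3 := by
    rw [hnval]
    exact final_help _ _ _ hfin hppqq
  have hcontra : n ^ 2 + 2 * n - 3 ≤ 4 * m := by
    omega
  exact absurd hm (not_lt.2 hcontra)
end

section
/- If n ≥ 4 is even and there exists a graph on n vertices with m edges admitting a maximal proper edge coloring with n−1 colors, then m ≥ n²/4. -/
open Finset

section Helpers

variable {V : Type*} [Fintype V] [DecidableEq V] (G : SimpleGraph V) [DecidableRel G.Adj]
  (f : Sym2 V → ℕ)

/-- The finite set of colors seen at a vertex. -/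
def SeenF (v : V) : Finset ℕ := (G.incidenceFinset v).image f

variable {G f}

lemma mem_seenF {v : V} {c : ℕ} : c ∈ SeenF G f v ↔ Sees G f v c := by
  unfold SeenF Sees
  simp only [Finset.mem_image, SimpleGraph.mem_incidenceFinset]
  constructor
  · rintro ⟨e, ⟨he, hv⟩, hfe⟩; exact ⟨e, he, hv, hfe⟩
  · rintro ⟨e, he, hv, hfe⟩; exact ⟨e, ⟨he, hv⟩, hfe⟩

variable {C : Finset ℕ}

lemma seenF_subset (hp : ProperEdgeColoring G f C) (v : V) : SeenF G f v ⊆ C := by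
  intro c hc
  rw [mem_seenF] at hc
  obtain ⟨e, he, _, hfe⟩ := hc
  exact hfe ▸ hp.1 e he

lemma card_seenF (hp : ProperEdgeColoring G f C) (v : V) :
    (SeenF G f v).card = G.degree v := by
  rw [← G.card_incidenceFinset_eq_degree v]
  apply Finset.card_image_of_injOn
  intro e₁ he₁ e₂ he₂ hfe
  by_contra hne
  have h₁ := (SimpleGraph.mem_incidenceFinset G v e₁).mp (Finset.mem_coe.mp he₁)
  have h₂ := (SimpleGraph.mem_incidenceFinset G v e₂).mp (Finset.mem_coe.mp he₂)
  exact hp.2 e₁ h₁.1 e₂ h₂.1 hne ⟨v, h₁.2, h₂.2⟩ hfe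

lemma adj_of_missed (hm : MaximalEdgeColoring G f C) {x y : V} {c : ℕ} (hxy : x ≠ y)
    (hc : c ∈ C) (h1 : c ∉ SeenF G f x) (h2 : c ∉ SeenF G f y) : G.Adj x y := by
  by_contra hadj
  rcases hm.2 x y hxy hadj c hc with h | h
  · exact h1 (mem_seenF.mpr h)
  · exact h2 (mem_seenF.mpr h)

lemma subset_union_seen (hm : MaximalEdgeColoring G f C) {x y : V} (hxy : x ≠ y)
    (h : ¬ G.Adj x y) : C ⊆ SeenF G f x ∪ SeenF G f y := by
  intro c hc
  rcases hm.2 x y hxy h c hc with hs | hs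
  · exact Finset.mem_union_left _ (mem_seenF.mpr hs)
  · exact Finset.mem_union_right _ (mem_seenF.mpr hs)

lemma pair_degree_bound (hm : MaximalEdgeColoring G f C)
    (hC : C.card = Fintype.card V - 1) (hn : 4 ≤ Fintype.card V)
    {x y : V} (hxy : x ≠ y) (h : ¬ G.Adj x y) :
    Fintype.card V ≤ G.degree x + G.degree y + 1 := by
  have h1 := Finset.card_le_card (subset_union_seen hm hxy h)
  have h2 := Finset.card_union_le (SeenF G f x) (SeenF G f y)
  rw [card_seenF hm.1, card_seenF hm.1] at h2
  omega

end Helpers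

lemma sq_key {a b : ℕ} (hab : a ≠ b) : 2 * (a * b) + 1 ≤ a * a + b * b := by
  rcases Nat.lt_or_ge a b with h | h
  · obtain ⟨k, hk⟩ := Nat.exists_eq_add_of_lt h
    subst hk; nlinarith
  · have h' : b < a := lt_of_le_of_ne h (fun hh => hab hh.symm)
    obtain ⟨k, hk⟩ := Nat.exists_eq_add_of_lt h'
    subst hk; nlinarith

/-- The key counting lemma for the clique case: if `{u, w} ∪ A` is a clique,
`w ~ v`, no vertex of `B` is adjacent to `u`, and every vertex of `B` (and `v`)
has degree at least `|B| + 1`, then the degree sum is large. -/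
lemma cliqueCount {V : Type*} [Fintype V] [DecidableEq V] (G : SimpleGraph V)
    [DecidableRel G.Adj]
    (u v w : V) (A B : Finset V) (a b : ℕ)
    (hA : A.card = a) (hB : B.card = b)
    (huv : u ≠ v) (huw : u ≠ w) (hvw : v ≠ w)
    (huA : u ∉ A) (hvA : v ∉ A) (hwA : w ∉ A)
    (huB : u ∉ B) (hvB : v ∉ B) (hwB : w ∉ B)
    (hAB : Disjoint A B)
    (hcover : ∀ z : V, z ∉ A → z ∉ B → z = u ∨ z = v ∨ z = w)
    (hQ : ∀ z ∈ insert u (insert w A), ∀ z' ∈ insert u (insert w A),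
      z ≠ z' → G.Adj z z')
    (hwv : G.Adj w v)
    (hBu : ∀ y ∈ B, ¬ G.Adj u y)
    (hdB : ∀ y ∈ B, b + 1 ≤ G.degree y)
    (hdv : b + 1 ≤ G.degree v)
    (hab : a ≠ b) :
    (a + b + 3) ^ 2 ≤ 2 * ∑ z, G.degree z := by
  classical
  set S : Finset V := insert w A with hS
  set Q : Finset V := insert u S with hQdef
  have hwS : w ∈ S := Finset.mem_insert_self _ _
  have huQ : u ∈ Q := Finset.mem_insert_self _ _
  have huS : u ∉ S := by
    simp only [hS, Finset.mem_insert]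
    push_neg
    exact ⟨huw, huA⟩
  have hScard : S.card = a + 1 := by
    rw [hS, Finset.card_insert_of_notMem hwA, hA]
  have hQcard : Q.card = a + 2 := by
    rw [hQdef, Finset.card_insert_of_notMem huS, hScard]
  have hSB : ∀ z ∈ S, z ∉ B := by
    intro z hz
    rcases Finset.mem_insert.mp hz with h | h
    · exact h ▸ hwB
    · exact fun hzB => (Finset.disjoint_left.mp hAB h) hzB
  have hQB : ∀ z ∈ Q, z ∉ B := by
    intro z hz
    rcases Finset.mem_insert.mp hz with h | h
    · exact h ▸ huB
    · exact hSB z h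
  have hvQ : v ∉ Q := by
    simp only [hQdef, hS, Finset.mem_insert]
    push_neg
    exact ⟨fun h => huv h.symm, fun h => hvw h, hvA⟩
  -- partition of the vertex set
  have huniv : (Finset.univ : Finset V) = Q ∪ ({v} ∪ B) := by
    ext z
    simp only [Finset.mem_univ, true_iff, Finset.mem_union, Finset.mem_singleton,
      hQdef, hS, Finset.mem_insert]
    by_cases hzA : z ∈ A
    · tauto
    · by_cases hzB : z ∈ B
      · tauto
      · rcases hcover z hzA hzB with h | h | h <;> tauto
  have hdisj : Disjoint Q ({v} ∪ B) := by
    rw [Finset.disjoint_union_right]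
    constructor
    · simp [Finset.disjoint_singleton_right, hvQ]
    · rw [Finset.disjoint_right]
      intro z hz
      exact fun hzQ => hQB z hzQ hz
  have hvB' : Disjoint ({v} : Finset V) B := by
    simp [Finset.disjoint_singleton_left, hvB]
  have hncard : Fintype.card V = a + b + 3 := by
    rw [← Finset.card_univ, huniv, Finset.card_union_of_disjoint hdisj,
      Finset.card_union_of_disjoint hvB', hQcard, hB, Finset.card_singleton]
    ring
  -- degree bounds for clique vertices
  have hQsub : ∀ z ∈ Q, Q.erase z ⊆ G.neighborFinset z := by
    intro z hz z' hz'
    rw [SimpleGraph.mem_neighborFinset]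
    exact hQ z hz z' (Finset.mem_of_mem_erase hz')
      (fun h => (Finset.ne_of_mem_erase hz') h.symm)
  have hdegQ : ∀ z ∈ Q, a + 1 + (G.neighborFinset z ∩ B).card ≤ G.degree z := by
    intro z hz
    have hsub : Q.erase z ∪ (G.neighborFinset z ∩ B) ⊆ G.neighborFinset z :=
      Finset.union_subset (hQsub z hz) (Finset.inter_subset_left)
    have hd : Disjoint (Q.erase z) (G.neighborFinset z ∩ B) := by
      rw [Finset.disjoint_right]
      intro x hx hxQ
      exact hQB x (Finset.mem_of_mem_erase hxQ) (Finset.mem_inter.mp hx).2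
    have := Finset.card_le_card hsub
    rw [Finset.card_union_of_disjoint hd, Finset.card_erase_of_mem hz, hQcard] at this
    simpa using this
  -- extra bound for w : v is also a neighbor
  have hdegw : a + 2 + (G.neighborFinset w ∩ B).card ≤ G.degree w := by
    have hwQ : w ∈ Q := Finset.mem_insert_of_mem hwS
    have hvmem : v ∈ G.neighborFinset w := by
      rw [SimpleGraph.mem_neighborFinset]; exact hwv
    have hsub : insert v (Q.erase w ∪ (G.neighborFinset w ∩ B)) ⊆ G.neighborFinset w := by
      apply Finset.insert_subset hvmem
      exact Finset.union_subset (hQsub w hwQ) (Finset.inter_subset_left)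
    have hvnot : v ∉ Q.erase w ∪ (G.neighborFinset w ∩ B) := by
      rw [Finset.mem_union]
      push_neg
      exact ⟨fun h => hvQ (Finset.mem_of_mem_erase h),
        fun h => hvB (Finset.mem_inter.mp h).2⟩
    have hd : Disjoint (Q.erase w) (G.neighborFinset w ∩ B) := by
      rw [Finset.disjoint_right]
      intro x hx hxQ
      exact hQB x (Finset.mem_of_mem_erase hxQ) (Finset.mem_inter.mp hx).2
    have h5 := Finset.card_le_card hsub
    rw [Finset.card_insert_of_notMem hvnot, Finset.card_union_of_disjoint hd,
      Finset.card_erase_of_mem hwQ, hQcard,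
      G.card_neighborFinset_eq_degree] at h5
    omega
  -- capacity bound for B vertices
  have hcap : ∀ y ∈ B, G.degree y ≤ b + (G.neighborFinset y ∩ S).card := by
    intro y hy
    have hyu : y ≠ u := fun h => huB (h ▸ hy)
    have hNsub : G.neighborFinset y ⊆ Finset.univ \ {u, y} := by
      intro z hz
      rw [SimpleGraph.mem_neighborFinset] at hz
      simp only [Finset.mem_sdiff, Finset.mem_univ, true_and, Finset.mem_insert,
        Finset.mem_singleton]
      push_neg
      constructor
      · rintro rfl; exact hBu y hy hz.symm
      · rintro rfl; exact (G.irrefl hz)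
    have hSsub : S ⊆ Finset.univ \ {u, y} := by
      intro z hz
      simp only [Finset.mem_sdiff, Finset.mem_univ, true_and, Finset.mem_insert,
        Finset.mem_singleton]
      push_neg
      exact ⟨fun h => huS (h ▸ hz), fun h => hSB z hz (h ▸ hy)⟩
    have hsplit : G.neighborFinset y ⊆
        ((Finset.univ \ {u, y}) \ S) ∪ (G.neighborFinset y ∩ S) := by
      intro z hz
      by_cases hzS : z ∈ S
      · exact Finset.mem_union_right _ (Finset.mem_inter.mpr ⟨hz, hzS⟩)
      · exact Finset.mem_union_left _ (Finset.mem_sdiff.mpr ⟨hNsub hz, hzS⟩)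
    have hcard2 : ({u, y} : Finset V).card = 2 := by
      rw [Finset.card_insert_of_notMem (by simpa using hyu.symm), Finset.card_singleton]
    have hc1 : ((Finset.univ \ {u, y}) \ S).card = b := by
      rw [Finset.card_sdiff_of_subset hSsub, Finset.card_sdiff_of_subset (Finset.subset_univ _),
        Finset.card_univ, hncard, hcard2, hScard]
      omega
    calc G.degree y = (G.neighborFinset y).card := rfl
      _ ≤ (((Finset.univ \ {u, y}) \ S) ∪ (G.neighborFinset y ∩ S)).card :=
          Finset.card_le_card hsplit
      _ ≤ ((Finset.univ \ {u, y}) \ S).card + (G.neighborFinset y ∩ S).card :=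
          Finset.card_union_le _ _
      _ = b + (G.neighborFinset y ∩ S).card := by rw [hc1]
  -- double counting of edges between B and S
  have hdouble : ∑ y ∈ B, (G.neighborFinset y ∩ S).card
      = ∑ z ∈ S, (G.neighborFinset z ∩ B).card := by
    have h1 : ∀ y : V, (G.neighborFinset y ∩ S).card
        = ∑ z ∈ S, if G.Adj y z then 1 else 0 := by
      intro y
      rw [← Finset.sum_filter]
      simp only [Finset.sum_const, smul_eq_mul, mul_one]
      congr 1
      ext z
      simp [Finset.mem_inter, Finset.mem_filter, SimpleGraph.mem_neighborFinset, and_comm]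
    have h2 : ∀ z : V, (G.neighborFinset z ∩ B).card
        = ∑ y ∈ B, if G.Adj y z then 1 else 0 := by
      intro z
      rw [← Finset.sum_filter]
      simp only [Finset.sum_const, smul_eq_mul, mul_one]
      congr 1
      ext y
      simp only [Finset.mem_inter, Finset.mem_filter, SimpleGraph.mem_neighborFinset]
      rw [G.adj_comm]
      tauto
    simp only [h1, h2]
    exact Finset.sum_comm
  -- sum decomposition
  have hsum : ∑ z, G.degree z
      = (G.degree u + (∑ x ∈ A, G.degree x + G.degree w))
        + (G.degree v + ∑ y ∈ B, G.degree y) := by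
    rw [huniv, Finset.sum_union hdisj, Finset.sum_union hvB', Finset.sum_singleton,
      hQdef, Finset.sum_insert huS, hS, Finset.sum_insert hwA]
    ring
  -- assemble all inequalities
  have hSA : ∑ x ∈ A, G.degree x ≥ a * (a + 1) + ∑ x ∈ A, (G.neighborFinset x ∩ B).card := by
    have : ∀ x ∈ A, a + 1 + (G.neighborFinset x ∩ B).card ≤ G.degree x := by
      intro x hx
      exact hdegQ x (Finset.mem_insert_of_mem (Finset.mem_insert_of_mem hx))
    calc ∑ x ∈ A, G.degree x ≥ ∑ x ∈ A, (a + 1 + (G.neighborFinset x ∩ B).card) :=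
          Finset.sum_le_sum this
      _ = a * (a + 1) + ∑ x ∈ A, (G.neighborFinset x ∩ B).card := by
          rw [Finset.sum_add_distrib, Finset.sum_const, hA, smul_eq_mul]
  have hSBlow : b * (b + 1) ≤ ∑ y ∈ B, G.degree y := by
    calc b * (b + 1) = ∑ _y ∈ B, (b + 1) := by rw [Finset.sum_const, hB, smul_eq_mul]
      _ ≤ ∑ y ∈ B, G.degree y := Finset.sum_le_sum hdB
  have hSBhigh : ∑ y ∈ B, G.degree y ≤ b * b + ∑ y ∈ B, (G.neighborFinset y ∩ S).card := by
    calc ∑ y ∈ B, G.degree y ≤ ∑ y ∈ B, (b + (G.neighborFinset y ∩ S).card) :=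
          Finset.sum_le_sum hcap
      _ = b * b + ∑ y ∈ B, (G.neighborFinset y ∩ S).card := by
          rw [Finset.sum_add_distrib, Finset.sum_const, hB, smul_eq_mul]
  have hScross : ∑ z ∈ S, (G.neighborFinset z ∩ B).card
      = (G.neighborFinset w ∩ B).card + ∑ x ∈ A, (G.neighborFinset x ∩ B).card := by
    rw [hS, Finset.sum_insert hwA]
  have hdu : a + 1 ≤ G.degree u :=
    le_trans (Nat.le_add_right _ _) (hdegQ u huQ)
  -- numeric conclusion
  have hkey : 2 * (a * b) + 1 ≤ a * a + b * b := sq_key hab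
  rw [hdouble, hScross] at hSBhigh
  have hexp : (a + b + 3) ^ 2 = a * a + b * b + 2 * (a * b) + 6 * a + 6 * b + 9 := by
    ring
  rw [hexp, hsum]
  linarith only [hSA, hSBlow, hSBhigh, hdegw, hdu, hdv, hkey]


/-- The tight-pair case: some non-adjacent pair has degree sum exactly `n - 1`. -/
lemma tight_case {V : Type*} [Fintype V] [DecidableEq V] (G : SimpleGraph V)
    [DecidableRel G.Adj] (f : Sym2 V → ℕ) (C : Finset ℕ)
    (hEven : Even (Fintype.card V)) (hn : 4 ≤ Fintype.card V)
    (hC : C.card = Fintype.card V - 1) (hmax : MaximalEdgeColoring G f C)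
    {u v : V} (huv : u ≠ v) (hnadj : ¬ G.Adj u v)
    (hsum : G.degree u + G.degree v + 1 = Fintype.card V)
    (hle : G.degree u ≤ G.degree v) :
    Fintype.card V ^ 2 ≤ 2 * ∑ z, G.degree z := by
  classical
  set n := Fintype.card V with hndef
  have hprop := hmax.1
  have hsub_u := seenF_subset hprop u
  have hsub_v := seenF_subset hprop v
  have hCsub : C ⊆ SeenF G f u ∪ SeenF G f v := subset_union_seen hmax huv hnadj
  have hunion : SeenF G f u ∪ SeenF G f v = C :=
    subset_antisymm (Finset.union_subset hsub_u hsub_v) hCsub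
  have hinter : SeenF G f u ∩ SeenF G f v = ∅ := by
    have h1 := Finset.card_inter_add_card_union (SeenF G f u) (SeenF G f v)
    rw [hunion, hC, card_seenF hprop, card_seenF hprop] at h1
    rw [← Finset.card_eq_zero]
    omega
  have hdisjS : ∀ {c : ℕ}, c ∈ SeenF G f u → c ∈ SeenF G f v → False := by
    intro c h1 h2
    have : c ∈ SeenF G f u ∩ SeenF G f v := Finset.mem_inter.mpr ⟨h1, h2⟩
    rw [hinter] at this
    exact Finset.notMem_empty _ this
  -- every other vertex is adjacent to u or v
  have hs3 : ∀ x : V, x ≠ u → x ≠ v → G.Adj u x ∨ G.Adj v x := by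
    intro x hxu hxv
    by_contra hcon
    push_neg at hcon
    have hxu' : ¬ G.Adj x u := fun h => hcon.1 h.symm
    have hxv' : ¬ G.Adj x v := fun h => hcon.2 h.symm
    have hSu : SeenF G f u ⊆ SeenF G f x := by
      intro c hc
      rcases Finset.mem_union.mp (subset_union_seen hmax hxv hxv' (hsub_u hc)) with h | h
      · exact h
      · exact absurd (hdisjS hc h) (fun h => h)
    have hSv : SeenF G f v ⊆ SeenF G f x := by
      intro c hc
      rcases Finset.mem_union.mp (subset_union_seen hmax hxu hxu' (hsub_v hc)) with h | h
      · exact h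
      · exact absurd (hdisjS h hc) (fun h => h)
    have hCx : C ⊆ SeenF G f x := by
      rw [← hunion]; exact Finset.union_subset hSu hSv
    have hfull : n - 1 ≤ G.degree x := by
      have := Finset.card_le_card hCx
      rwa [hC, card_seenF hprop] at this
    have hxlt : G.degree x < n := G.degree_lt_card_verts x
    have hNx : G.neighborFinset x = Finset.univ.erase x := by
      apply Finset.eq_of_subset_of_card_le
      · intro z hz
        rw [Finset.mem_erase]
        have hadj := (SimpleGraph.mem_neighborFinset G x z).mp hz
        exact ⟨fun h => G.irrefl (by rwa [h] at hadj), Finset.mem_univ z⟩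
      · rw [Finset.card_erase_of_mem (Finset.mem_univ x), Finset.card_univ,
          G.card_neighborFinset_eq_degree]
        omega
    have : u ∈ G.neighborFinset x := by
      rw [hNx]
      exact Finset.mem_erase.mpr ⟨Ne.symm hxu, Finset.mem_univ u⟩
    exact hxu' ((SimpleGraph.mem_neighborFinset G x u).mp this)
  -- unique common neighbor
  have hNN : G.neighborFinset u ∪ G.neighborFinset v = Finset.univ \ {u, v} := by
    ext z
    simp only [Finset.mem_union, SimpleGraph.mem_neighborFinset, Finset.mem_sdiff,
      Finset.mem_univ, true_and, Finset.mem_insert, Finset.mem_singleton]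
    constructor
    · rintro (h | h)
      · push_neg
        exact ⟨fun hz => G.irrefl (hz ▸ h), fun hz => hnadj (hz ▸ h)⟩
      · push_neg
        exact ⟨fun hz => hnadj ((hz ▸ h).symm), fun hz => G.irrefl (hz ▸ h)⟩
    · intro hz
      push_neg at hz
      exact hs3 z hz.1 hz.2
  have hNNcard : (G.neighborFinset u ∪ G.neighborFinset v).card = n - 2 := by
    rw [hNN, Finset.card_sdiff_of_subset (Finset.subset_univ _), Finset.card_univ]
    have : ({u, v} : Finset V).card = 2 := by
      rw [Finset.card_insert_of_notMem (by simpa using huv), Finset.card_singleton]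
    rw [this]
  have hWcard : (G.neighborFinset u ∩ G.neighborFinset v).card = 1 := by
    have h1 := Finset.card_inter_add_card_union (G.neighborFinset u) (G.neighborFinset v)
    rw [hNNcard, G.card_neighborFinset_eq_degree, G.card_neighborFinset_eq_degree] at h1
    omega
  obtain ⟨w, hw⟩ := Finset.card_eq_one.mp hWcard
  have hwmem : w ∈ G.neighborFinset u ∩ G.neighborFinset v := by
    rw [hw]; exact Finset.mem_singleton_self w
  have hwuN : w ∈ G.neighborFinset u := (Finset.mem_inter.mp hwmem).1
  have hwvN : w ∈ G.neighborFinset v := (Finset.mem_inter.mp hwmem).2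
  have hadj_uw : G.Adj u w := (SimpleGraph.mem_neighborFinset G u w).mp hwuN
  have hadj_vw : G.Adj v w := (SimpleGraph.mem_neighborFinset G v w).mp hwvN
  set A := (G.neighborFinset u).erase w with hAdef
  set B := (G.neighborFinset v).erase w with hBdef
  set a := A.card with hadef
  set b := B.card with hbdef
  have hacard : a + 1 = G.degree u := by
    rw [hadef, hAdef, Finset.card_erase_add_one hwuN, G.card_neighborFinset_eq_degree]
  have hbcard : b + 1 = G.degree v := by
    rw [hbdef, hBdef, Finset.card_erase_add_one hwvN, G.card_neighborFinset_eq_degree]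
  have huw : u ≠ w := fun h => G.irrefl (h ▸ hadj_uw)
  have hvw : v ≠ w := fun h => G.irrefl (h ▸ hadj_vw)
  have huA : u ∉ A := fun h =>
    G.irrefl ((SimpleGraph.mem_neighborFinset G u u).mp (Finset.erase_subset _ _ h))
  have hvA : v ∉ A := fun h =>
    hnadj ((SimpleGraph.mem_neighborFinset G u v).mp (Finset.erase_subset _ _ h))
  have hwA : w ∉ A := Finset.notMem_erase _ _
  have hvB : v ∉ B := fun h =>
    G.irrefl ((SimpleGraph.mem_neighborFinset G v v).mp (Finset.erase_subset _ _ h))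
  have huB : u ∉ B := fun h =>
    hnadj (((SimpleGraph.mem_neighborFinset G v u).mp (Finset.erase_subset _ _ h)).symm)
  have hwB : w ∉ B := Finset.notMem_erase _ _
  have hABdisj : Disjoint A B := by
    rw [Finset.disjoint_left]
    intro z hzA hzB
    have hzw : z ∈ G.neighborFinset u ∩ G.neighborFinset v :=
      Finset.mem_inter.mpr ⟨Finset.erase_subset _ _ hzA, Finset.erase_subset _ _ hzB⟩
    rw [hw] at hzw
    exact (Finset.ne_of_mem_erase hzA) (Finset.mem_singleton.mp hzw)
  have hcover : ∀ z : V, z ∉ A → z ∉ B → z = u ∨ z = v ∨ z = w := by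
    intro z hzA hzB
    by_cases hzu : z = u
    · exact Or.inl hzu
    by_cases hzv : z = v
    · exact Or.inr (Or.inl hzv)
    refine Or.inr (Or.inr ?_)
    by_contra hzw
    rcases hs3 z hzu hzv with h | h
    · exact hzA (Finset.mem_erase.mpr ⟨hzw, (SimpleGraph.mem_neighborFinset G u z).mpr h⟩)
    · exact hzB (Finset.mem_erase.mpr ⟨hzw, (SimpleGraph.mem_neighborFinset G v z).mpr h⟩)
  have hAv : ∀ x ∈ A, ¬ G.Adj v x := by
    intro x hx hadj
    have hzw : x ∈ G.neighborFinset u ∩ G.neighborFinset v :=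
      Finset.mem_inter.mpr ⟨Finset.erase_subset _ _ hx,
        (SimpleGraph.mem_neighborFinset G v x).mpr hadj⟩
    rw [hw] at hzw
    exact (Finset.ne_of_mem_erase hx) (Finset.mem_singleton.mp hzw)
  have hBu : ∀ y ∈ B, ¬ G.Adj u y := by
    intro y hy hadj
    have hzw : y ∈ G.neighborFinset u ∩ G.neighborFinset v :=
      Finset.mem_inter.mpr ⟨(SimpleGraph.mem_neighborFinset G u y).mpr hadj,
        Finset.erase_subset _ _ hy⟩
    rw [hw] at hzw
    exact (Finset.ne_of_mem_erase hy) (Finset.mem_singleton.mp hzw)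
  have hdA : ∀ x ∈ A, a + 1 ≤ G.degree x := by
    intro x hx
    have hxv : x ≠ v := fun h => hvA (h ▸ hx)
    have := pair_degree_bound hmax hC hn hxv (fun h => hAv x hx h.symm)
    omega
  have hdB : ∀ y ∈ B, b + 1 ≤ G.degree y := by
    intro y hy
    have hyu : y ≠ u := fun h => huB (h ▸ hy)
    have := pair_degree_bound hmax hC hn hyu (fun h => hBu y hy h.symm)
    omega
  have hncard : n = a + b + 3 := by omega
  have hab : a ≠ b := by
    obtain ⟨k, hk⟩ := hEven
    omega
  by_cases hcA : ∃ c ∈ C, ∀ z ∈ insert u (insert w A), c ∉ SeenF G f z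
  · obtain ⟨c, hcC, hmiss⟩ := hcA
    have hQ : ∀ z ∈ insert u (insert w A), ∀ z' ∈ insert u (insert w A),
        z ≠ z' → G.Adj z z' :=
      fun z hz z' hz' hne => adj_of_missed hmax hne hcC (hmiss z hz) (hmiss z' hz')
    have hres := cliqueCount G u v w A B a b rfl rfl huv huw hvw huA hvA hwA huB hvB hwB
      hABdisj hcover hQ hadj_vw.symm hBu hdB (le_of_eq hbcard) hab
    rw [hncard]
    exact hres
  by_cases hcB : ∃ c ∈ C, ∀ z ∈ insert v (insert w B), c ∉ SeenF G f z
  · obtain ⟨c, hcC, hmiss⟩ := hcB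
    have hQ : ∀ z ∈ insert v (insert w B), ∀ z' ∈ insert v (insert w B),
        z ≠ z' → G.Adj z z' :=
      fun z hz z' hz' hne => adj_of_missed hmax hne hcC (hmiss z hz) (hmiss z' hz')
    have hcover' : ∀ z : V, z ∉ B → z ∉ A → z = v ∨ z = u ∨ z = w := by
      intro z h1 h2
      rcases hcover z h2 h1 with h | h | h
      · exact Or.inr (Or.inl h)
      · exact Or.inl h
      · exact Or.inr (Or.inr h)
    have hres := cliqueCount G v u w B A b a rfl rfl (Ne.symm huv) hvw huw hvB huB hwB
      hvA huA hwA hABdisj.symm hcover' hQ hadj_uw.symm hAv hdA (le_of_eq hacard)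
      (Ne.symm hab)
    rw [Nat.add_comm b a] at hres
    rw [hncard]
    exact hres
  · -- neither clique case: color counting
    push_neg at hcA hcB
    have hNu : insert w A = G.neighborFinset u := Finset.insert_erase hwuN
    have hNv : insert w B = G.neighborFinset v := Finset.insert_erase hwvN
    have hQcard : (insert u (insert w A)).card = a + 2 := by
      rw [Finset.card_insert_of_notMem (by
        simp only [Finset.mem_insert]
        push_neg
        exact ⟨huw, huA⟩), Finset.card_insert_of_notMem hwA]
    have hQ'card : (insert v (insert w B)).card = b + 2 := by
      rw [Finset.card_insert_of_notMem (by
        simp only [Finset.mem_insert]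
        push_neg
        exact ⟨hvw, hvB⟩), Finset.card_insert_of_notMem hwB]
    have hKbound : ∀ c ∈ C, (Finset.univ.filter (fun z => c ∉ SeenF G f z)).card
        ≤ if c ∈ SeenF G f u then b + 1 else a + 1 := by
      intro c hc
      by_cases hcu : c ∈ SeenF G f u
      · simp only [hcu, if_true]
        have hcv : c ∉ SeenF G f v := fun h => hdisjS hcu h
        obtain ⟨z₀, hz₀Q, hz₀sees⟩ := hcB c hc
        have hsub : Finset.univ.filter (fun z => c ∉ SeenF G f z)
            ⊆ (insert v (insert w B)).erase z₀ := by
          intro z hz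
          rw [Finset.mem_filter] at hz
          have hzmiss := hz.2
          have hzQ' : z ∈ insert v (insert w B) := by
            by_cases hzv : z = v
            · exact hzv ▸ Finset.mem_insert_self _ _
            · have hadj := adj_of_missed hmax hzv hc hzmiss hcv
              have hzN : z ∈ G.neighborFinset v :=
                (SimpleGraph.mem_neighborFinset G v z).mpr hadj.symm
              rw [← hNv] at hzN
              exact Finset.mem_insert_of_mem hzN
          refine Finset.mem_erase.mpr ⟨?_, hzQ'⟩
          intro h
          exact hzmiss (h ▸ hz₀sees)
        have hcc := Finset.card_le_card hsub
        rw [Finset.card_erase_of_mem hz₀Q, hQ'card] at hcc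
        omega
      · simp only [hcu, if_false]
        obtain ⟨z₀, hz₀Q, hz₀sees⟩ := hcA c hc
        have hsub : Finset.univ.filter (fun z => c ∉ SeenF G f z)
            ⊆ (insert u (insert w A)).erase z₀ := by
          intro z hz
          rw [Finset.mem_filter] at hz
          have hzmiss := hz.2
          have hzQ' : z ∈ insert u (insert w A) := by
            by_cases hzu : z = u
            · exact hzu ▸ Finset.mem_insert_self _ _
            · have hadj := adj_of_missed hmax hzu hc hzmiss hcu
              have hzN : z ∈ G.neighborFinset u :=
                (SimpleGraph.mem_neighborFinset G u z).mpr hadj.symm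
              rw [← hNu] at hzN
              exact Finset.mem_insert_of_mem hzN
          refine Finset.mem_erase.mpr ⟨?_, hzQ'⟩
          intro h
          exact hzmiss (h ▸ hz₀sees)
        have hcc := Finset.card_le_card hsub
        rw [Finset.card_erase_of_mem hz₀Q, hQcard] at hcc
        omega
    have hmisscount : ∑ z : V, (C \ SeenF G f z).card
        = ∑ c ∈ C, (Finset.univ.filter (fun z => c ∉ SeenF G f z)).card := by
      have h1 : ∀ z : V, (C \ SeenF G f z).card
          = ∑ c ∈ C, if c ∉ SeenF G f z then 1 else 0 := by
        intro z
        rw [Finset.sdiff_eq_filter, Finset.card_filter]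
      have h2 : ∀ c : ℕ, (Finset.univ.filter (fun z => c ∉ SeenF G f z)).card
          = ∑ z : V, if c ∉ SeenF G f z then 1 else 0 := by
        intro c
        rw [Finset.card_filter]
      simp only [h1, h2]
      exact Finset.sum_comm
    have hSucount : (C.filter (fun c => c ∈ SeenF G f u)).card = a + 1 := by
      have : C.filter (fun c => c ∈ SeenF G f u) = SeenF G f u := by
        ext c
        simp only [Finset.mem_filter]
        exact ⟨fun h => h.2, fun h => ⟨hsub_u h, h⟩⟩
      rw [this, card_seenF hprop, ← hacard]
    have hbound : ∑ c ∈ C, (Finset.univ.filter (fun z => c ∉ SeenF G f z)).card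
        ≤ 2 * ((a + 1) * (b + 1)) := by
      calc ∑ c ∈ C, (Finset.univ.filter (fun z => c ∉ SeenF G f z)).card
          ≤ ∑ c ∈ C, (if c ∈ SeenF G f u then b + 1 else a + 1) :=
            Finset.sum_le_sum hKbound
        _ = (C.filter (fun c => c ∈ SeenF G f u)).card * (b + 1)
            + (C.filter (fun c => ¬ c ∈ SeenF G f u)).card * (a + 1) := by
            rw [Finset.sum_ite, Finset.sum_const, Finset.sum_const]
            simp [mul_comm]
        _ ≤ 2 * ((a + 1) * (b + 1)) := by
            have h3 := Finset.card_filter_add_card_filter_not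
              (s := C) (p := fun c => c ∈ SeenF G f u)
            rw [hSucount] at h3 ⊢
            have h4 : (C.filter (fun c => ¬ c ∈ SeenF G f u)).card = b + 1 := by
              rw [hC] at h3
              omega
            rw [h4]
            ring_nf
            omega
    have hdeg : ∀ z : V, (C \ SeenF G f z).card + G.degree z = n - 1 := by
      intro z
      rw [← card_seenF hprop z, ← hC]
      exact Finset.card_sdiff_add_card_eq_card (seenF_subset hprop z)
    have hsumdeg : ∑ z : V, (C \ SeenF G f z).card + ∑ z, G.degree z = n * (n - 1) := by
      rw [← Finset.sum_add_distrib]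
      rw [Finset.sum_congr rfl (fun z _ => hdeg z), Finset.sum_const, Finset.card_univ,
        smul_eq_mul]
    have hmbound : ∑ z : V, (C \ SeenF G f z).card ≤ 2 * ((a + 1) * (b + 1)) := by
      rw [hmisscount]; exact hbound
    have haltb : a < b := by omega
    obtain ⟨k, hk⟩ : ∃ k, b = a + (k + 1) := ⟨b - a - 1, by omega⟩
    have hn1 : n - 1 = a + b + 2 := by omega
    rw [hn1] at hsumdeg
    rw [hncard, hk] at hsumdeg ⊢
    nlinarith [hsumdeg, hmbound]

theorem stmt_12 {V : Type*} [Fintype V] [DecidableEq V] (G : SimpleGraph V)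
    [DecidableRel G.Adj] (f : Sym2 V → ℕ) (C : Finset ℕ)
    (hEven : Even (Fintype.card V)) (hn : 4 ≤ Fintype.card V)
    (hC : C.card = Fintype.card V - 1)
    (hmax : MaximalEdgeColoring G f C) :
    4 * G.edgeFinset.card ≥ Fintype.card V ^ 2 := by
  classical
  set n := Fintype.card V with hndef
  have h2m := G.sum_degrees_eq_twice_card_edges
  rw [ge_iff_le]
  have hfinal : n ^ 2 ≤ 2 * ∑ z, G.degree z := by
    by_cases htight : ∃ p q : V, p ≠ q ∧ ¬ G.Adj p q ∧ G.degree p + G.degree q + 1 = n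
    · obtain ⟨p, q, hpq, hpqadj, hpqsum⟩ := htight
      rcases le_total (G.degree p) (G.degree q) with hle | hle
      · exact tight_case G f C hEven hn hC hmax hpq hpqadj hpqsum hle
      · exact tight_case G f C hEven hn hC hmax (Ne.symm hpq)
          (fun h => hpqadj h.symm) (by omega) hle
    · push_neg at htight
      have hpair : ∀ x y : V, x ≠ y → ¬ G.Adj x y → n ≤ G.degree x + G.degree y := by
        intro x y hxy hnadj
        have h1 := pair_degree_bound hmax hC hn hxy hnadj
        have h2 := htight x y hxy hnadj
        omega
      haveI hNE : Nonempty V := by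
        rw [← Fintype.card_pos_iff]
        omega
      obtain ⟨u, -, hu⟩ := Finset.exists_min_image (Finset.univ : Finset V) (fun z => G.degree z)
        Finset.univ_nonempty
      by_cases hδ : n ≤ 2 * G.degree u
      · calc n ^ 2 = ∑ _z : V, n := by
              rw [Finset.sum_const, Finset.card_univ, smul_eq_mul, sq]
          _ ≤ ∑ z, 2 * G.degree z := Finset.sum_le_sum (fun z _ => by
              have := hu z (Finset.mem_univ z)
              omega)
          _ = 2 * ∑ z, G.degree z := by rw [Finset.mul_sum]
      · set δ := G.degree u with hδdef
        have hδ2 : 2 * δ + 2 ≤ n := by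
          obtain ⟨k, hk⟩ := hEven
          omega
        have huN : u ∉ G.neighborFinset u := by simp
        have hins : (insert u (G.neighborFinset u)).card = δ + 1 := by
          rw [Finset.card_insert_of_notMem huN, G.card_neighborFinset_eq_degree]
        set R : Finset V := Finset.univ \ insert u (G.neighborFinset u) with hR
        have hRcard : R.card + (δ + 1) = n := by
          rw [hR, Finset.card_sdiff_of_subset (Finset.subset_univ _), Finset.card_univ, hins]
          have := Finset.card_le_card (Finset.subset_univ (insert u (G.neighborFinset u)))
          rw [hins, Finset.card_univ] at this
          omega
        have hsplit : ∑ z, G.degree z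
            = ∑ y ∈ R, G.degree y + ∑ x ∈ insert u (G.neighborFinset u), G.degree x := by
          rw [hR]
          exact (Finset.sum_sdiff (Finset.subset_univ _)).symm
        rw [Finset.sum_insert huN] at hsplit
        have hNsum : δ * δ ≤ ∑ x ∈ G.neighborFinset u, G.degree x := by
          calc δ * δ = ∑ _x ∈ G.neighborFinset u, δ := by
                rw [Finset.sum_const, G.card_neighborFinset_eq_degree, smul_eq_mul]
            _ ≤ ∑ x ∈ G.neighborFinset u, G.degree x :=
                Finset.sum_le_sum (fun x _ => hu x (Finset.mem_univ x))
        have hRsum : R.card * (R.card + 1) ≤ ∑ y ∈ R, G.degree y := by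
          have hRdeg : ∀ y ∈ R, R.card + 1 ≤ G.degree y := by
            intro y hy
            rw [hR, Finset.mem_sdiff] at hy
            have hyu : y ≠ u := by
              rintro rfl
              exact hy.2 (Finset.mem_insert_self y _)
            have hyN : ¬ G.Adj u y := by
              intro h
              exact hy.2 (Finset.mem_insert_of_mem ((SimpleGraph.mem_neighborFinset G u y).mpr h))
            have := hpair u y (Ne.symm hyu) hyN
            omega
          calc R.card * (R.card + 1) = ∑ _y ∈ R, (R.card + 1) := by
                rw [Finset.sum_const, smul_eq_mul]
            _ ≤ ∑ y ∈ R, G.degree y := Finset.sum_le_sum hRdeg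
        have hrd : R.card ≠ δ := by
          obtain ⟨k, hk⟩ := hEven
          omega
        have hkey := sq_key hrd
        have hneq : n = R.card + δ + 1 := by omega
        rw [hsplit, hneq]
        have hexp2 : (R.card + δ + 1) ^ 2
            = R.card * R.card + δ * δ + 2 * (R.card * δ) + 2 * R.card + 2 * δ + 1 := by
          ring
        rw [hexp2]
        linarith only [hNsum, hRsum, hkey]
  omega
end

section
/- Let G be a graph on n vertices with ∑_{v} d(v)² ≤ n³/4 + 3n − 2 and 2|E(G)| = n²/2 + 2. If G contains a clique on n/2 + 3 vertices, then we reach a contradiction: the minimum possible value of ∑ d(v)² given the clique constraint and the fixed degree sum exceeds n³/4 + 3n − 2. -/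
set_option maxHeartbeats 1000000

theorem stmt_15 {V : Type*} [Fintype V] [DecidableEq V] (G : SimpleGraph V)
    [DecidableRel G.Adj]
    (hEven : Even (Fintype.card V)) (hn : 10 ≤ Fintype.card V)
    (hsq : 4 * ∑ v : V, G.degree v ^ 2 ≤ Fintype.card V ^ 3 + 12 * Fintype.card V - 8)
    (hm : 4 * G.edgeFinset.card = Fintype.card V ^ 2 + 4)
    (K : Finset V) (hK : 2 * K.card = Fintype.card V + 6)
    (hclique : G.IsClique (K : Set V)) :
    False := by
  classical
  obtain ⟨m, hm2⟩ := hEven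
  have hnm : Fintype.card V = 2 * m := by omega
  have hm5 : 5 ≤ m := by omega
  have hKcard : K.card = m + 3 := by omega
  have hKc : Kᶜ.card = m - 3 := by
    rw [Finset.card_compl, hKcard, hnm]; omega
  -- degree bound on clique vertices
  have hdeg : ∀ v ∈ K, m + 2 ≤ G.degree v := by
    intro v hv
    have hsub : K.erase v ⊆ G.neighborFinset v := by
      intro u hu
      simp only [Finset.mem_erase] at hu
      rw [SimpleGraph.mem_neighborFinset]
      exact (hclique hu.2 hv hu.1).symm
    have := Finset.card_le_card hsub
    rw [Finset.card_erase_of_mem hv, hKcard, G.card_neighborFinset_eq_degree] at this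
    omega
  -- degree sum
  have hsum : ∑ v : V, G.degree v = 2 * G.edgeFinset.card :=
    G.sum_degrees_eq_twice_card_edges
  have hS : 2 * ∑ v : V, G.degree v = (2*m)^2 + 4 := by
    rw [hsum, ← hnm]; omega
  -- split sums
  have hsplit : ∑ v ∈ K, G.degree v + ∑ v ∈ Kᶜ, G.degree v = ∑ v : V, G.degree v :=
    Finset.sum_add_sum_compl K _
  have hsplit2 : ∑ v ∈ K, G.degree v ^ 2 + ∑ v ∈ Kᶜ, G.degree v ^ 2
      = ∑ v : V, G.degree v ^ 2 := Finset.sum_add_sum_compl K _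
  -- lower bound on sum over K
  have hA : (m + 3) * (m + 2) ≤ ∑ v ∈ K, G.degree v := by
    calc (m+3)*(m+2) = ∑ _v ∈ K, (m+2) := by rw [Finset.sum_const, hKcard, smul_eq_mul]
    _ ≤ _ := Finset.sum_le_sum hdeg
  -- convexity on K : d^2 ≥ 2(m+2)d - (m+2)^2
  have hP : ∀ v ∈ K, 2*(m+2) * G.degree v ≤ G.degree v ^ 2 + (m+2)^2 := by
    intro v hv
    have := hdeg v hv
    nlinarith [sq_nonneg (G.degree v - (m+2))]
  have hPsum : 2*(m+2) * ∑ v ∈ K, G.degree v ≤ ∑ v ∈ K, G.degree v ^ 2 + (m+3)*(m+2)^2 := by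
    have := Finset.sum_le_sum hP
    simp only [Finset.sum_add_distrib, Finset.sum_const, hKcard, smul_eq_mul,
      Finset.mul_sum] at this ⊢
    omega
  -- Cauchy-Schwarz on Kᶜ
  have hQ : (∑ v ∈ Kᶜ, G.degree v) ^ 2 ≤ (m - 3) * ∑ v ∈ Kᶜ, G.degree v ^ 2 := by
    have := sq_sum_le_card_mul_sum_sq (s := Kᶜ) (f := fun v => G.degree v)
    rwa [hKc] at this
  -- move to integers
  set A := ∑ v ∈ K, G.degree v with hAdef
  set B := ∑ v ∈ Kᶜ, G.degree v with hBdef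
  set P := ∑ v ∈ K, G.degree v ^ 2 with hPdef
  set Q := ∑ v ∈ Kᶜ, G.degree v ^ 2 with hQdef
  have hABS : 2 * (A + B) = (2*m)^2 + 4 := by rw [hsplit]; exact hS
  have hsq' : 4 * (P + Q) + 8 ≤ (2*m)^3 + 12*(2*m) := by
    rw [hsplit2, ← hnm]; omega
  -- now pure arithmetic over ℤ
  have hm3 : (3:ℤ) ≤ m := by exact_mod_cast (by omega : 3 ≤ m)
  have hQn : B^2 + 3*Q ≤ m*Q := by
    have h1 : (m-3)*Q + 3*Q = m*Q := by rw [← Nat.add_mul]; congr 1; omega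
    omega
  have hQ' : ((B:ℤ))^2 + 3*Q ≤ (m:ℤ) * Q := by exact_mod_cast hQn
  have hA' : ((m:ℤ)+3)*((m:ℤ)+2) ≤ A := by exact_mod_cast hA
  have hP' : 2*((m:ℤ)+2) * A ≤ P + ((m:ℤ)+3)*((m:ℤ)+2)^2 := by exact_mod_cast hPsum
  have hABS' : 2 * ((A:ℤ) + B) = (2*(m:ℤ))^2 + 4 := by exact_mod_cast hABS
  have hsq'' : 4 * ((P:ℤ) + Q) + 8 ≤ (2*(m:ℤ))^3 + 12*(2*(m:ℤ)) := by exact_mod_cast hsq'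
  have hm5' : (5:ℤ) ≤ m := by exact_mod_cast hm5
  nlinarith [sq_nonneg ((A:ℤ) - ((m:ℤ)+3)*((m:ℤ)+2)),
    mul_nonneg (by linarith : (0:ℤ) ≤ (m:ℤ) - 3) (by linarith [hA'] : (0:ℤ) ≤ (A:ℤ) - ((m:ℤ)+3)*((m:ℤ)+2)),
    mul_le_mul_of_nonneg_left hP' (by linarith : (0:ℤ) ≤ (m:ℤ) - 3),
    mul_le_mul_of_nonneg_left hsq'' (by linarith : (0:ℤ) ≤ (m:ℤ) - 3),
    hQ', hABS', hsq'']
end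

section
/- Let G be a graph on n vertices, n even, in which a color class (perfect matching on a subset) forces: there is a set K of n/2 + 1 vertices forming a clique, there are at most n/2 edges between K and V∖K, and every vertex outside K has degree at least n/2. Then a contradiction arises: some vertex of K has no neighbor outside K, forcing each of the n/2 − 1 vertices outside K to have at least 2 neighbors in K, giving at least n − 2 > n/2 edges between K and V∖K. -/
theorem stmt_18 {V : Type*} [Fintype V] [DecidableEq V] (G : SimpleGraph V)
    [DecidableRel G.Adj]
    (hEven : Even (Fintype.card V)) (hn : 10 ≤ Fintype.card V)
    (K : Finset V) (hK : 2 * K.card = Fintype.card V + 2)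
    (hclique : G.IsClique (K : Set V))
    (hcross : 2 * (Finset.univ.filter
        (fun p : V × V => p.1 ∈ K ∧ p.2 ∉ K ∧ G.Adj p.1 p.2)).card
      ≤ Fintype.card V)
    (hout : ∀ v : V, v ∉ K → 2 * G.degree v ≥ Fintype.card V)
    (hnonadj : ∀ u v : V, u ≠ v → ¬ G.Adj u v →
      G.degree u + G.degree v ≥ Fintype.card V) :
    False := by
  classical
  set n := Fintype.card V with hn'
  have hKcompl : Kᶜ.card = n - K.card := by
    simp [Finset.card_compl, hn']
  have hsum : (Finset.univ.filter
      (fun p : V × V => p.1 ∈ K ∧ p.2 ∉ K ∧ G.Adj p.1 p.2)).card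
      = ∑ v ∈ Kᶜ, (K.filter (fun u => G.Adj u v)).card := by
    rw [Finset.card_eq_sum_card_fiberwise (f := Prod.snd) (t := Kᶜ)
      (fun p hp => by
        simp only [Finset.mem_coe, Finset.mem_filter] at hp
        exact Finset.mem_compl.2 hp.2.2.1)]
    apply Finset.sum_congr rfl
    intro v hv
    apply Finset.card_bij (fun p _ => p.1)
    · intro p hp
      simp only [Finset.mem_filter, Finset.mem_univ, true_and] at hp
      obtain ⟨⟨h1, _, h3⟩, h4⟩ := hp
      subst h4
      exact Finset.mem_filter.2 ⟨h1, h3⟩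
    · intro p hp q hq h
      simp only [Finset.mem_filter] at hp hq
      exact Prod.ext h (hp.2.trans hq.2.symm)
    · intro u hu
      simp only [Finset.mem_filter] at hu
      refine ⟨(u, v), ?_, rfl⟩
      simp only [Finset.mem_filter, Finset.mem_univ, true_and]
      exact ⟨⟨hu.1, Finset.mem_compl.1 hv, hu.2⟩, trivial⟩
  have hv2 : ∀ v ∈ Kᶜ, 2 ≤ (K.filter (fun u => G.Adj u v)).card := by
    intro v hv
    rw [Finset.mem_compl] at hv
    have hdeg := hout v hv
    have hsub : G.neighborFinset v ⊆ K.filter (fun u => G.Adj u v) ∪ Kᶜ.erase v := by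
      intro u hu
      rw [SimpleGraph.mem_neighborFinset] at hu
      by_cases hK' : u ∈ K
      · exact Finset.mem_union_left _ (Finset.mem_filter.2 ⟨hK', hu.symm⟩)
      · exact Finset.mem_union_right _
          (Finset.mem_erase.2 ⟨(G.ne_of_adj hu).symm, Finset.mem_compl.2 hK'⟩)
    have hle := Finset.card_le_card hsub
    have h2 := Finset.card_union_le (K.filter (fun u => G.Adj u v)) (Kᶜ.erase v)
    have herase : (Kᶜ.erase v).card = Kᶜ.card - 1 :=
      Finset.card_erase_of_mem (Finset.mem_compl.2 hv)
    have hmem : 1 ≤ Kᶜ.card := Finset.card_pos.2 ⟨v, Finset.mem_compl.2 hv⟩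
    have hdeg' : G.degree v = (G.neighborFinset v).card := rfl
    omega
  have hlow : 2 * Kᶜ.card ≤ ∑ v ∈ Kᶜ, (K.filter (fun u => G.Adj u v)).card := by
    calc 2 * Kᶜ.card = ∑ _v ∈ Kᶜ, 2 := by
          rw [Finset.sum_const, smul_eq_mul, mul_comm]
      _ ≤ _ := Finset.sum_le_sum hv2
  rw [hsum] at hcross
  have hKle : K.card ≤ n := Finset.card_le_univ K
  omega
end
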